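/- arXiv:2402.05657 — 12 statements merged into one kernel-verified Lean document; each statement's English description precedes it below -/
import Mathlib

section
/- Let u = u_n⋯u_1 and v = v_k⋯v_1 be words (indexed from the right). Then the q-binomial coefficient (u choose v)_q equals the sum over all sets Y = {y_k > ⋯ > y_1} ⊆ {1,…,n} with u_{y_k}⋯u_{y_1} = v of q raised to the power (y_1 + ⋯ + y_k) − k(k+1)/2. -/
open Polynomial

/-- q-binomial on reversed words: first list = word with rightmost letter first,
matching the recursion (ua choose vb)_q = (u choose vb)_q * q^{|vb|} + [a=b](u choose v)_q. -/
noncomputable def qBaux {α : Type*} [DecidableEq α] : List α → List α → Polynomial ℕ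
  | _, [] => 1
  | [], _ :: _ => 0
  | a :: u, b :: v =>
      qBaux u (b :: v) * X ^ (v.length + 1) + if a = b then qBaux u v else 0

/-- q-binomial coefficient of words `u`, `v` given in natural reading order. -/
noncomputable def qB {α : Type*} [DecidableEq α] (u v : List α) : Polynomial ℕ :=
  qBaux u.reverse v.reverse

/-!
Occurrences of `v = v'b` in `u = u'a` that avoid the rightmost position of `u` are occurrences
of `v` in `u'` with every position shifted by one, which multiplies the weight by `q^|v|`;
those that use it force `a = b` and are occurrences of `v'` in `u'`, where the shift of the
`|v'|` remaining positions and of the position `1` itself is exactly absorbed by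
`|v|(|v|+1)/2 - |v'|(|v'|+1)/2 = |v|`. So the positional sum obeys the defining recursion.
-/

open Finset

section qB

variable {α : Type*} [DecidableEq α]

@[simp]
lemma qB_nil_right (u : List α) : qB u [] = 1 := by
  cases h : u.reverse <;> simp [qB, qBaux, h]

lemma qB_nil_left {v : List α} (hv : v ≠ []) : qB [] v = 0 := by
  cases h : v.reverse with
  | nil => simp_all
  | cons b w => simp [qB, qBaux, h]

lemma qB_append_singleton (u v : List α) (a b : α) :
    qB (u ++ [a]) (v ++ [b]) =
      qB u (v ++ [b]) * X ^ (v.length + 1) + if a = b then qB u v else 0 := by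
  simp [qB, qBaux]

end qB

lemma Finset.sort_insert_of_forall_lt {α : Type*} [LinearOrder α] {s : Finset α} {a : α}
    (h : ∀ b ∈ s, b < a) : (insert a s).sort = s.sort ++ [a] := by
  have hnodup : (s.sort ++ [a]).Nodup := by
    simpa [List.nodup_append] using fun b hb => (h b hb).ne
  have hpair : (s.sort ++ [a]).Pairwise (· ≤ ·) := by
    simpa [List.pairwise_append] using fun b hb => (h b hb).le
  rw [← (List.toFinset_sort (· ≤ ·) hnodup).2 hpair]
  congr 1
  ext
  simp

lemma Nat.succ_mul_succ_succ_div_two (k : ℕ) :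
    (k + 1) * (k + 1 + 1) / 2 = k * (k + 1) / 2 + (k + 1) := by
  rw [show (k + 1) * (k + 1 + 1) = k * (k + 1) + (k + 1) * 2 by ring,
    Nat.add_mul_div_right _ _ two_pos]

lemma Finset.card_mul_succ_div_two_le_sum {S : Finset ℕ} (hS : ∀ x ∈ S, 0 < x) :
    #S * (#S + 1) / 2 ≤ ∑ x ∈ S, x := by
  induction S using Finset.induction_on_max with
  | empty => simp
  | insert a s hlt ih =>
    have ha : a ∉ s := fun h => lt_irrefl a (hlt a h)
    have hcard : #s + 1 ≤ a := by
      have hsub : s ⊆ Ioo 0 a := fun x hx => mem_Ioo.2 ⟨hS x (mem_insert_of_mem hx), hlt x hx⟩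
      have hs := card_le_card hsub
      rw [Nat.card_Ioo] at hs
      have ha_pos := hS a (mem_insert_self a s)
      omega
    have hs := ih fun x hx => hS x (mem_insert_of_mem hx)
    rw [card_insert_of_notMem ha, sum_insert ha, Nat.succ_mul_succ_succ_div_two]
    omega

namespace Fin

variable {n : ℕ}

lemma sort_map_castSuccEmb (t : Finset (Fin n)) :
    (t.map castSuccEmb).sort = t.sort.map castSucc :=
  (Fin.strictMono_castSucc.strictMonoOn _).map_finsetSort.symm

lemma sort_insert_last_map_castSuccEmb (t : Finset (Fin n)) :
    (insert (last n) (t.map castSuccEmb)).sort = t.sort.map castSucc ++ [last n] := by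
  rw [sort_insert_of_forall_lt (by simp [castSucc_lt_last]), sort_map_castSuccEmb]

lemma sum_finset_succ {M : Type*} [AddCommMonoid M] (g : Finset (Fin (n + 1)) → M) :
    ∑ s, g s = ∑ t : Finset (Fin n), g (t.map castSuccEmb) +
      ∑ t : Finset (Fin n), g (insert (last n) (t.map castSuccEmb)) := by
  have hinj := image_injective (castSuccEmb (n := n)).injective
  rw [← powerset_univ, univ_castSuccEmb, cons_eq_insert, sum_powerset_insert (by simp),
    map_eq_image, powerset_image, sum_image hinj.injOn, sum_image hinj.injOn, powerset_univ]
  simp only [map_eq_image]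

lemma card_mul_succ_div_two_le_sum_sub (t : Finset (Fin n)) :
    #t * (#t + 1) / 2 ≤ ∑ i ∈ t, (n - (i : ℕ)) := by
  have hinj : Set.InjOn (fun i : Fin n => n - (i : ℕ)) t := fun i _ j _ h => by
    have := i.isLt; have := j.isLt; ext; simp only at h; omega
  have := card_mul_succ_div_two_le_sum (S := t.image fun i : Fin n => n - (i : ℕ)) (by simp)
  rwa [card_image_of_injOn hinj, sum_image hinj] at this

lemma sum_map_castSuccEmb_sub (t : Finset (Fin n)) :
    ∑ i ∈ t.map castSuccEmb, (n + 1 - (i : ℕ)) = ∑ i ∈ t, (n - (i : ℕ)) + #t := by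
  rw [sum_map, card_eq_sum_ones, ← sum_add_distrib]
  refine sum_congr rfl fun i _ => ?_
  have := i.isLt
  simp only [castSuccEmb_apply, val_castSucc]
  omega

end Fin

section occurrenceSum

variable {α : Type*} [DecidableEq α]

/-- `s` lists positions of `f` from the left, so `n - i` is the position of `i` counted from
the right, as in the paper. -/
noncomputable def occurrenceTerm {n : ℕ} (f : Fin n → α) (v : List α) (s : Finset (Fin n)) :
    Polynomial ℕ :=
  if (s.sort (· ≤ ·)).map f = v then
    X ^ ((∑ i ∈ s, (n - (i : ℕ))) - v.length * (v.length + 1) / 2)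
  else 0

noncomputable def occurrenceSum {n : ℕ} (f : Fin n → α) (v : List α) : Polynomial ℕ :=
  ∑ s : Finset (Fin n), occurrenceTerm f v s

@[simp]
lemma occurrenceSum_nil_right {n : ℕ} (f : Fin n → α) : occurrenceSum f [] = 1 := by
  simp [occurrenceSum, occurrenceTerm, ← List.length_eq_zero_iff]

lemma occurrenceSum_of_isEmpty (f : Fin 0 → α) {v : List α} (hv : v ≠ []) :
    occurrenceSum f v = 0 := by
  simp [occurrenceSum, occurrenceTerm, eq_empty_of_isEmpty, hv.symm]

lemma occurrenceTerm_map_castSuccEmb {n : ℕ} (f : Fin (n + 1) → α) (w : List α) (b : α)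
    (t : Finset (Fin n)) :
    occurrenceTerm f (w ++ [b]) (t.map Fin.castSuccEmb) =
      occurrenceTerm (Fin.init f) (w ++ [b]) t * X ^ (w.length + 1) := by
  have hinit : f ∘ Fin.castSucc = Fin.init f := rfl
  rw [occurrenceTerm, occurrenceTerm, Fin.sort_map_castSuccEmb, List.map_map, hinit]
  split_ifs with h
  · have hcard : #t = w.length + 1 := by simpa using congrArg List.length h
    -- the subtraction in the exponent does not truncate
    have hle := Fin.card_mul_succ_div_two_le_sum_sub t
    rw [hcard, Nat.succ_mul_succ_succ_div_two] at hle
    rw [Fin.sum_map_castSuccEmb_sub, ← pow_add, List.length_append, List.length_singleton,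
      Nat.succ_mul_succ_succ_div_two, hcard]
    congr 1
    omega
  · rw [zero_mul]

lemma occurrenceTerm_insert_last {n : ℕ} (f : Fin (n + 1) → α) (w : List α) (b : α)
    (t : Finset (Fin n)) :
    occurrenceTerm f (w ++ [b]) (insert (Fin.last n) (t.map Fin.castSuccEmb)) =
      if f (Fin.last n) = b then occurrenceTerm (Fin.init f) w t else 0 := by
  have hinit : f ∘ Fin.castSucc = Fin.init f := rfl
  rw [occurrenceTerm, occurrenceTerm, Fin.sort_insert_last_map_castSuccEmb, List.map_append,
    List.map_map, hinit, List.map_singleton]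
  simp only [List.append_singleton_inj]
  by_cases hb : f (Fin.last n) = b
  · simp only [hb, and_true, if_true]
    split_ifs with h
    · have hcard : #t = w.length := by simpa using congrArg List.length h
      rw [sum_insert (by simp [Fin.castSucc_ne_last]), Fin.sum_map_castSuccEmb_sub,
        List.length_append, List.length_singleton, Nat.succ_mul_succ_succ_div_two, hcard,
        Fin.val_last]
      congr 1
      omega
    · rfl
  · simp [hb]

lemma occurrenceSum_append_singleton {n : ℕ} (f : Fin (n + 1) → α) (w : List α) (b : α) :
    occurrenceSum f (w ++ [b]) =
      occurrenceSum (Fin.init f) (w ++ [b]) * X ^ (w.length + 1) +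
        if f (Fin.last n) = b then occurrenceSum (Fin.init f) w else 0 := by
  simp only [occurrenceSum, Fin.sum_finset_succ, occurrenceTerm_map_castSuccEmb,
    occurrenceTerm_insert_last, sum_mul, sum_ite_irrel, sum_const_zero]

theorem qB_ofFn {n : ℕ} (f : Fin n → α) (v : List α) :
    qB (List.ofFn f) v = occurrenceSum f v := by
  induction n generalizing v with
  | zero =>
    rcases v.eq_nil_or_concat' with rfl | ⟨w, b, rfl⟩
    · simp
    · simp [qB_nil_left, occurrenceSum_of_isEmpty]
  | succ n ih =>
    rcases v.eq_nil_or_concat' with rfl | ⟨w, b, rfl⟩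
    · simp
    · rw [List.ofFn_succ', List.concat_eq_append, qB_append_singleton,
        occurrenceSum_append_singleton, ih, ih]
      rfl

end occurrenceSum

/-- Positional formula: (u choose v)_q is the sum over occurrences Y of v in u
(Y a set of positions, counted from the right: position of the i-th letter from the left
of u, seen from the right, is u.length - i) of q^{s(Y) - k(k+1)/2}. -/
theorem stmt1 {α : Type*} [DecidableEq α] (u v : List α) :
    qB u v =
      ∑ s : Finset (Fin u.length),
        if (s.sort (· ≤ ·)).map u.get = v then
          X ^ ((∑ i ∈ s, (u.length - (i : ℕ))) - v.length * (v.length + 1) / 2)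
        else 0 := by
  have h := qB_ofFn u.get v
  rwa [List.ofFn_get] at h
end

section
/- For all words u, v, the reversal relation holds: q^{|v|(|u|−|v|)} · (ũ choose ṽ)_{1/q} = (u choose v)_q, where ũ, ṽ denote the reversals of u, v. Equivalently, for all 0 ≤ i ≤ |v|(|u|−|v|), the coefficient of q^i in (u choose v)_q equals the coefficient of q^{|v|(|u|−|v|)−i} in (ũ choose ṽ)_q. -/
open Polynomial

/-- Interpret a polynomial in ℕ[q] as a rational function (q ↦ X). -/
noncomputable def toR : Polynomial ℕ →+* RatFunc ℚ :=
  Polynomial.eval₂RingHom (Nat.castRingHom _) RatFunc.X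

/-- Evaluation of a polynomial in ℕ[q] at 1/q. -/
noncomputable def toRinv : Polynomial ℕ →+* RatFunc ℚ :=
  Polynomial.eval₂RingHom (Nat.castRingHom _) (RatFunc.X)⁻¹

section Aux

variable {α : Type*} [DecidableEq α]

@[simp] lemma qBaux_nil_right (U : List α) : qBaux U ([] : List α) = 1 := by
  cases U <;> rfl

@[simp] lemma qBaux_nil_left (b : α) (V : List α) : qBaux ([] : List α) (b :: V) = 0 := rfl

lemma qBaux_cons (a b : α) (U V : List α) :
    qBaux (a :: U) (b :: V) =
      qBaux U (b :: V) * X ^ (V.length + 1) + if a = b then qBaux U V else 0 := rfl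

lemma qBaux_eq_zero {U V : List α} (h : U.length < V.length) : qBaux U V = 0 := by
  induction U generalizing V with
  | nil =>
    cases V with
    | nil => simp at h
    | cons b V => rfl
  | cons a U ih =>
    cases V with
    | nil => simp at h
    | cons b V =>
      simp only [List.length_cons, Nat.add_lt_add_iff_right] at h
      rw [qBaux_cons, ih (V := b :: V) (by simp; omega), zero_mul, zero_add,
        ih (V := V) h, ite_self]

lemma arith1 {k n : ℕ} (h : k + 1 ≤ n) :
    (k + 1) * (n - (k + 1)) + (k + 1) = (k + 1) * (n - k) := by
  obtain ⟨m, rfl⟩ := Nat.exists_eq_add_of_le h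
  have h1 : k + 1 + m - (k + 1) = m := by omega
  have h2 : k + 1 + m - k = m + 1 := by omega
  rw [h1, h2, Nat.mul_succ]

lemma qBaux_natDegree_le (U V : List α) :
    (qBaux U V).natDegree ≤ V.length * (U.length - V.length) := by
  induction U generalizing V with
  | nil =>
    cases V with
    | nil => simp
    | cons b V => simp
  | cons a U ih =>
    cases V with
    | nil => simp
    | cons b V =>
      rw [qBaux_cons]
      refine (natDegree_add_le _ _).trans (max_le ?_ ?_)
      · by_cases h : V.length + 1 ≤ U.length
        · refine natDegree_mul_le.trans ?_
          have h2 := ih (b :: V)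
          simp only [List.length_cons] at h2 ⊢
          rw [Nat.succ_sub_succ]
          calc (qBaux U (b :: V)).natDegree + (X ^ (V.length + 1) : Polynomial ℕ).natDegree
              ≤ (V.length + 1) * (U.length - (V.length + 1)) + (V.length + 1) := by
                rw [natDegree_X_pow]; exact Nat.add_le_add_right h2 _
            _ = (V.length + 1) * (U.length - V.length) := arith1 h
        · rw [qBaux_eq_zero (by simpa using Nat.lt_of_not_le h), zero_mul, natDegree_zero]
          exact Nat.zero_le _
      · split
        · refine (ih V).trans ?_
          simp only [List.length_cons, Nat.succ_sub_succ]
          exact Nat.mul_le_mul (Nat.le_succ _) le_rfl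
        · simp

lemma qBaux_snoc (a b : α) (W Z : List α) :
    qBaux (W ++ [a]) (Z ++ [b]) =
      qBaux W (Z ++ [b]) + if a = b then X ^ (W.length - Z.length) * qBaux W Z else 0 := by
  induction W generalizing Z with
  | nil =>
    cases Z with
    | nil =>
      simp [qBaux_cons]
    | cons e Z' =>
      simp [qBaux_cons, qBaux_eq_zero (show ([] : List α).length < (Z' ++ [b]).length by simp),
        qBaux_eq_zero (show ([] : List α).length < (e :: Z').length by simp)]
  | cons c W ih =>
    cases Z with
    | nil =>
      rw [List.cons_append, List.nil_append, qBaux_cons, qBaux_nil_right]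
      have hW := ih []
      simp only [List.nil_append, List.length_nil, Nat.sub_zero, qBaux_nil_right, mul_one] at hW
      rw [hW, qBaux_cons, qBaux_nil_right]
      simp only [List.length_nil, List.length_cons, Nat.sub_zero, mul_one]
      by_cases hab : a = b <;> by_cases hcb : c = b <;>
        simp [hab, hcb, add_mul, pow_succ] <;> ring
    | cons d Z' =>
      rw [List.cons_append, List.cons_append, qBaux_cons, ← List.cons_append, ih (d :: Z'),
        ih Z', List.cons_append, qBaux_cons, qBaux_cons]
      simp only [List.length_cons, List.length_append, List.length_nil, Nat.succ_sub_succ]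
      by_cases hzw : Z'.length + 1 ≤ W.length
      · obtain ⟨m, hm⟩ := Nat.exists_eq_add_of_le hzw
        rw [hm]
        have h1 : Z'.length + 1 + m - (Z'.length + 1) = m := by omega
        have h2 : Z'.length + 1 + m - Z'.length = m + 1 := by omega
        rw [h1, h2]
        by_cases hab : a = b <;> by_cases hcd : c = d <;>
          simp [hab, hcd, add_mul, mul_add] <;> ring
      · rw [qBaux_eq_zero (show W.length < (d :: Z').length by simp; omega)]
        by_cases hab : a = b <;> by_cases hcd : c = d <;>
          simp [hab, hcd, add_mul, mul_add] <;> ring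

lemma reflect_zero' (f : Polynomial ℕ) : reflect 0 f = f := by
  ext i
  rw [coeff_reflect]
  congr 1
  rcases Nat.eq_zero_or_pos i with h | h
  · subst h; simp
  · exact revAt_eq_self_of_lt h

lemma qBaux_reflect (U V : List α) :
    reflect (V.length * (U.length - V.length)) (qBaux U V) = qBaux U.reverse V.reverse := by
  induction U generalizing V with
  | nil =>
    cases V with
    | nil => simp [reflect_zero']
    | cons b V =>
      rw [qBaux_nil_left, reflect_zero, List.reverse_nil]
      exact (qBaux_eq_zero (by simp)).symm
  | cons a U ih =>
    cases V with
    | nil =>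
      simp [reflect_zero']
    | cons b V =>
      by_cases h : V.length + 1 ≤ U.length
      · have hN : (b :: V).length * ((a :: U).length - (b :: V).length)
            = (V.length + 1) * (U.length - (V.length + 1)) + (V.length + 1) := by
          simp only [List.length_cons, Nat.succ_sub_succ]
          exact (arith1 h).symm
        have hd1 : (qBaux U (b :: V)).natDegree
            ≤ (V.length + 1) * (U.length - (V.length + 1)) := by
          simpa using qBaux_natDegree_le U (b :: V)
        rw [qBaux_cons, reflect_add, hN,
          reflect_mul (qBaux U (b :: V)) _ hd1 (natDegree_X_pow _).le,
          reflect_monomial, revAt_le (le_refl _), Nat.sub_self, pow_zero, mul_one]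
        have ih1 := ih (b :: V)
        simp only [List.length_cons] at ih1
        rw [ih1]
        -- the second summand
        have hsplit : reflect ((V.length + 1) * (U.length - (V.length + 1)) + (V.length + 1))
              (if a = b then qBaux U V else 0)
            = if a = b then X ^ (U.length - V.length) * qBaux U.reverse V.reverse else 0 := by
          split
          · have hN2 : (V.length + 1) * (U.length - (V.length + 1)) + (V.length + 1)
                = V.length * (U.length - V.length) + (U.length - V.length) := by
              rw [arith1 h, Nat.succ_mul]
            have hd2 : (qBaux U V).natDegree ≤ V.length * (U.length - V.length) :=
              qBaux_natDegree_le U V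
            rw [hN2, show qBaux U V = qBaux U V * X ^ 0 by rw [pow_zero, mul_one],
              reflect_mul (qBaux U V) _ hd2 (by simp), reflect_monomial,
              revAt_le (Nat.zero_le _), Nat.sub_zero, ih V, mul_comm]
          · exact reflect_zero
        rw [hsplit, List.reverse_cons, List.reverse_cons, qBaux_snoc]
        simp [List.length_reverse]
      · have hN : (b :: V).length * ((a :: U).length - (b :: V).length) = 0 := by
          simp only [List.length_cons, Nat.succ_sub_succ]
          have : U.length - V.length = 0 := by omega
          rw [this, Nat.mul_zero]
        have hUV : U.length - V.length = 0 := by omega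
        rw [hN, reflect_zero', qBaux_cons,
          qBaux_eq_zero (show U.length < (b :: V).length by simp; omega), zero_mul, zero_add,
          List.reverse_cons, List.reverse_cons, qBaux_snoc,
          qBaux_eq_zero
            (show U.reverse.length < (V.reverse ++ [b]).length by simp; omega), zero_add]
        have ih2 := ih V
        rw [show V.length * (U.length - V.length) = 0 by rw [hUV, Nat.mul_zero],
          reflect_zero'] at ih2
        simp [List.length_reverse, hUV, ih2]

end Aux

/-- Reversal relation: q^{|v|(|u|-|v|)} (ũ choose ṽ)_{1/q} = (u choose v)_q, and the
equivalent statement on coefficients. -/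
theorem stmt4 {α : Type*} [DecidableEq α] (u v : List α) :
    (RatFunc.X ^ (v.length * (u.length - v.length)) * toRinv (qB u.reverse v.reverse)
        = toR (qB u v)) ∧
    (∀ i ≤ v.length * (u.length - v.length),
      (qB u v).coeff i
        = (qB u.reverse v.reverse).coeff (v.length * (u.length - v.length) - i)) := by
  set N := v.length * (u.length - v.length) with hNdef
  have key : qB u.reverse v.reverse = reflect N (qB u v) := by
    have h := qBaux_reflect u.reverse v.reverse
    simp only [List.length_reverse, List.reverse_reverse] at h
    rw [qB, qB, List.reverse_reverse, List.reverse_reverse, ← h]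
  have hdeg : (qB u v).natDegree ≤ N := by
    have := qBaux_natDegree_le u.reverse v.reverse
    simpa [qB, List.length_reverse] using this
  constructor
  · rw [key]
    haveI : Invertible (RatFunc.X : RatFunc ℚ) := invertibleOfNonzero RatFunc.X_ne_zero
    have := Polynomial.eval₂_reflect_mul_pow (Nat.castRingHom (RatFunc ℚ)) RatFunc.X N
      (qB u v) hdeg
    rw [invOf_eq_inv] at this
    rw [mul_comm]
    exact this
  · intro i hi
    rw [key, coeff_reflect, revAt_le (Nat.sub_le N i), Nat.sub_sub_self hi]
end

section
/- For any word u and distinct letters a, b, the identity q·[(u choose ab)_q + (u choose ba)_q] = (u choose a)_q · (u choose b)_q holds. -/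
open Polynomial

lemma qaux_key {α : Type*} [DecidableEq α] (a b : α) (hab : a ≠ b) (w : List α) :
    X * (qBaux w [b, a] + qBaux w [a, b]) = qBaux w [a] * qBaux w [b] := by
  induction w with
  | nil => simp [qBaux]
  | cons c w ih =>
    simp only [qBaux, List.length_cons, List.length_nil]
    by_cases hca : c = a <;> by_cases hcb : c = b
    · exact absurd (hca ▸ hcb) hab
    · simp only [hca, hcb, hab, hab.symm, if_true, if_false, if_neg hab, if_neg (Ne.symm hab)]
      trans (qBaux w [a] * qBaux w [b]) * X ^ 2 + X * qBaux w [b]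
      · rw [← ih]; ring
      · ring
    · simp only [hca, hcb, hab, hab.symm, if_true, if_false, if_neg hab, if_neg (Ne.symm hab)]
      trans (qBaux w [a] * qBaux w [b]) * X ^ 2 + X * qBaux w [a]
      · rw [← ih]; ring
      · ring
    · simp only [hca, hcb, if_false]
      trans (qBaux w [a] * qBaux w [b]) * X ^ 2
      · rw [← ih]; ring
      · ring

/-- q·[(u choose ab)_q + (u choose ba)_q] = (u choose a)_q (u choose b)_q for a ≠ b. -/
theorem stmt5 {α : Type*} [DecidableEq α] (u : List α) (a b : α) (hab : a ≠ b) :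
    X * (qB u [a, b] + qB u [b, a]) = qB u [a] * qB u [b] := by
  simpa [qB] using qaux_key a b hab u.reverse
end

section
/- For any word u and letters a, b, c with a ≠ b and b ≠ c, one has (u choose a)_q (u choose cb)_q + q^2 (u choose abc)_q = (u choose c)_q (u choose ab)_q + q^2 (u choose cba)_q. -/
open Polynomial

private lemma key6 {α : Type*} [DecidableEq α] (a b c : α)
    (hab : a ≠ b) (hbc : b ≠ c) : ∀ w : List α,
    qBaux w [a] * qBaux w [b, c] + X ^ 2 * qBaux w [c, b, a]
      = qBaux w [c] * qBaux w [b, a] + X ^ 2 * qBaux w [a, b, c]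
  | [] => by simp [qBaux]
  | x :: w => by
    have ih := key6 a b c hab hbc w
    have inj : Function.Injective (Polynomial.map (Nat.castRingHom ℤ)) :=
      Polynomial.map_injective _ Nat.cast_injective
    have ihZ := congrArg (Polynomial.map (Nat.castRingHom ℤ)) ih
    simp only [Polynomial.map_add, Polynomial.map_mul, Polynomial.map_pow,
      Polynomial.map_X] at ihZ
    simp only [qBaux, List.length_cons, List.length_nil]
    apply inj
    split_ifs <;>
      (try (exfalso; simp_all; done)) <;>
      (simp only [Polynomial.map_add, Polynomial.map_mul, Polynomial.map_pow,
            Polynomial.map_X, Polynomial.map_one, Polynomial.map_zero];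
          linear_combination (X : Polynomial ℤ) ^ 3 * ihZ)

/-- (u choose a)(u choose cb) + q²(u choose abc) = (u choose c)(u choose ab) + q²(u choose cba),
for letters with a ≠ b and b ≠ c. -/
theorem stmt6 {α : Type*} [DecidableEq α] (u : List α) (a b c : α)
    (hab : a ≠ b) (hbc : b ≠ c) :
    qB u [a] * qB u [c, b] + X ^ 2 * qB u [a, b, c]
      = qB u [c] * qB u [a, b] + X ^ 2 * qB u [c, b, a] := by
  simpa [qB] using key6 a b c hab hbc u.reverse
end

section
/- Let z = z_1⋯z_ℓ be a word with z_i ≠ z_{i+1} for all 1 ≤ i < ℓ, and let u be a word over the alphabet of z. Then the inverse N of the q-Parikh matrix P_z(u) satisfies: N is upper unitriangular, and for 1 ≤ i < j ≤ ℓ+1, N_{i,j} = (−1)^{i+j} q^{(j−i)(|u|−1)} · M_{i,j}(1/q), where M = P_z(ũ) is the q-Parikh matrix of the reversal of u. -/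
open Polynomial

/-- The matrix M_{d,j}: identity plus q^j at positions (i,i+1) (0-based) where z_{i+1} = d. -/
noncomputable def entryM {α : Type*} [DecidableEq α] (n : ℕ) (z : List α) (d : α) (j : ℕ) :
    Matrix (Fin (n+1)) (Fin (n+1)) (Polynomial ℕ) :=
  Matrix.of fun i i' =>
    if i = i' then 1
    else if (i' : ℕ) = (i : ℕ) + 1 ∧ z[(i : ℕ)]? = some d then X ^ j else 0

/-- The q-Parikh matrix of the word w = w_m ⋯ w_0 (natural reading order) induced by z:
P_z(w) = M_{w_m,m} ⋯ M_{w_0,0}. -/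
noncomputable def Pm {α : Type*} [DecidableEq α] (n : ℕ) (z : List α) :
    List α → Matrix (Fin (n+1)) (Fin (n+1)) (Polynomial ℕ)
  | [] => 1
  | a :: t => entryM n z a t.length * Pm n z t

set_option maxHeartbeats 1000000
set_option synthInstance.maxHeartbeats 1000000

namespace Stmt8Aux

variable {α : Type*} [DecidableEq α]

lemma toR_X_pow (k : ℕ) : toR (X ^ k) = RatFunc.X ^ k := by simp [toR]

lemma toRinv_X_pow (k : ℕ) : toRinv (X ^ k) = ((RatFunc.X : RatFunc ℚ) ^ k)⁻¹ := by
  simp [toRinv, inv_pow]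

lemma Xpow_ne (k : ℕ) : ((RatFunc.X : RatFunc ℚ) ^ k) ≠ 0 :=
  pow_ne_zero _ RatFunc.X_ne_zero

/-- superdiagonal indicator matrix over RatFunc -/
noncomputable def Em (n : ℕ) (z : List α) (a : α) :
    Matrix (Fin (n+1)) (Fin (n+1)) (RatFunc ℚ) :=
  Matrix.of fun i j =>
    if (j : ℕ) = (i : ℕ) + 1 ∧ z[(i : ℕ)]? = some a then 1 else 0

noncomputable def Dm (n : ℕ) : Matrix (Fin (n+1)) (Fin (n+1)) (RatFunc ℚ) :=
  Matrix.diagonal fun i => RatFunc.X ^ (i : ℕ)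

noncomputable def Dinv (n : ℕ) : Matrix (Fin (n+1)) (Fin (n+1)) (RatFunc ℚ) :=
  Matrix.diagonal fun i => ((RatFunc.X : RatFunc ℚ) ^ (i : ℕ))⁻¹

lemma Dm_mul_Dinv (n : ℕ) : Dm n * Dinv n = 1 := by
  simp [Dm, Dinv, Matrix.diagonal_mul_diagonal, mul_inv_cancel₀ (Xpow_ne _)]

lemma Dinv_mul_Dm (n : ℕ) : Dinv n * Dm n = 1 := by
  simp [Dm, Dinv, Matrix.diagonal_mul_diagonal, inv_mul_cancel₀ (Xpow_ne _)]

lemma Dm_cancel (n : ℕ) (B : Matrix (Fin (n+1)) (Fin (n+1)) (RatFunc ℚ)) :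
    Dm n * (Dinv n * B) = B := by rw [← mul_assoc, Dm_mul_Dinv, one_mul]

lemma Dinv_cancel (n : ℕ) (B : Matrix (Fin (n+1)) (Fin (n+1)) (RatFunc ℚ)) :
    Dinv n * (Dm n * B) = B := by rw [← mul_assoc, Dinv_mul_Dm, one_mul]

lemma entryM_mul_apply (n : ℕ) (z : List α) (a : α) (m : ℕ)
    (B : Matrix (Fin (n+1)) (Fin (n+1)) (Polynomial ℕ)) (i j : Fin (n+1)) :
    (entryM n z a m * B) i j =
      B i j + if h : (i : ℕ) + 1 < n + 1 ∧ z[(i : ℕ)]? = some a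
        then X ^ m * B ⟨(i : ℕ) + 1, h.1⟩ j else 0 := by
  rw [Matrix.mul_apply]
  by_cases h : (i : ℕ) + 1 < n + 1 ∧ z[(i : ℕ)]? = some a
  · rw [dif_pos h]
    set i' : Fin (n+1) := ⟨(i : ℕ) + 1, h.1⟩ with hi'
    have hne : i ≠ i' := by
      intro e
      have : (i : ℕ) = (i : ℕ) + 1 := congrArg Fin.val e
      omega
    have key : ∀ k : Fin (n+1), entryM n z a m i k * B k j =
        (if k = i then B i j else 0) + (if k = i' then X ^ m * B i' j else 0) := by
      intro k
      simp only [entryM, Matrix.of_apply]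
      by_cases hk : k = i
      · subst hk
        rw [if_pos rfl, if_pos rfl, if_neg (fun e : k = i' => hne e), one_mul, add_zero]
      · by_cases hk' : k = i'
        · subst hk'
          rw [if_neg (fun e : i = i' => hne e), if_pos ⟨rfl, h.2⟩,
            if_neg (fun e : i' = i => hne e.symm), if_pos rfl, zero_add]
        · have h2 : ¬ ((k : ℕ) = (i : ℕ) + 1 ∧ z[(i : ℕ)]? = some a) := by
            rintro ⟨hk1, -⟩
            exact hk' (Fin.ext (show (k : ℕ) = (i' : ℕ) from hk1))
          rw [if_neg (fun e : i = k => hk e.symm), if_neg h2, if_neg hk, if_neg hk',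
            zero_mul, add_zero]
    rw [Finset.sum_congr rfl fun k _ => key k, Finset.sum_add_distrib,
      Finset.sum_ite_eq', Finset.sum_ite_eq']
    simp
  · rw [dif_neg h, add_zero]
    have key : ∀ k : Fin (n+1), entryM n z a m i k * B k j =
        (if k = i then B i j else 0) := by
      intro k
      simp only [entryM, Matrix.of_apply]
      by_cases hk : k = i
      · subst hk; rw [if_pos rfl, if_pos rfl, one_mul]
      · have h2 : ¬ ((k : ℕ) = (i : ℕ) + 1 ∧ z[(i : ℕ)]? = some a) := by
          rintro ⟨hk1, hz2⟩
          exact h ⟨hk1 ▸ k.isLt, hz2⟩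
        rw [if_neg (fun e : i = k => hk e.symm), if_neg h2, if_neg hk, zero_mul]
    rw [Finset.sum_congr rfl fun k _ => key k, Finset.sum_ite_eq']
    simp

lemma Em_mul_apply (n : ℕ) (z : List α) (a : α)
    (B : Matrix (Fin (n+1)) (Fin (n+1)) (RatFunc ℚ)) (i j : Fin (n+1)) :
    (Em n z a * B) i j =
      if h : (i : ℕ) + 1 < n + 1 ∧ z[(i : ℕ)]? = some a
        then B ⟨(i : ℕ) + 1, h.1⟩ j else 0 := by
  rw [Matrix.mul_apply]
  by_cases h : (i : ℕ) + 1 < n + 1 ∧ z[(i : ℕ)]? = some a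
  · rw [dif_pos h]
    set i' : Fin (n+1) := ⟨(i : ℕ) + 1, h.1⟩ with hi'
    have key : ∀ k : Fin (n+1), Em n z a i k * B k j =
        (if k = i' then B i' j else 0) := by
      intro k
      simp only [Em, Matrix.of_apply]
      by_cases hk' : k = i'
      · subst hk'
        rw [if_pos ⟨rfl, h.2⟩, if_pos rfl, one_mul]
      · have h2 : ¬ ((k : ℕ) = (i : ℕ) + 1 ∧ z[(i : ℕ)]? = some a) := by
          rintro ⟨hk1, -⟩
          exact hk' (Fin.ext (show (k : ℕ) = (i' : ℕ) from hk1))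
        rw [if_neg h2, if_neg hk', zero_mul]
    rw [Finset.sum_congr rfl fun k _ => key k, Finset.sum_ite_eq']
    simp
  · rw [dif_neg h]
    apply Finset.sum_eq_zero
    intro k _
    have h2 : ¬ ((k : ℕ) = (i : ℕ) + 1 ∧ z[(i : ℕ)]? = some a) := by
      rintro ⟨hk1, hz2⟩
      exact h ⟨hk1 ▸ k.isLt, hz2⟩
    simp only [Em, Matrix.of_apply]
    rw [if_neg h2, zero_mul]

lemma chain_no_two {z : List α} (hz : z.Chain' (· ≠ ·)) {a : α} {i : ℕ}
    (h1 : z[i]? = some a) (h2 : z[i+1]? = some a) : False := by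
  rw [List.getElem?_eq_some_iff] at h1 h2
  obtain ⟨l1, e1⟩ := h1
  obtain ⟨l2, e2⟩ := h2
  exact (List.isChain_iff_getElem.mp hz i (by omega)) (e1.trans e2.symm)

lemma Em_sq {z : List α} (n : ℕ) (hz : z.Chain' (· ≠ ·)) (a : α) :
    Em n z a * Em n z a = 0 := by
  ext i j
  rw [Matrix.mul_apply]
  have : ∀ k ∈ Finset.univ, Em n z a i k * Em n z a k j = 0 := by
    intro k _
    simp only [Em, Matrix.of_apply]
    split_ifs with h1 h2
    · exact absurd (chain_no_two hz h1.2 (h1.1 ▸ h2.2)) not_false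
    · rw [mul_zero]
    · rw [zero_mul]
    · rw [zero_mul]
  rw [Finset.sum_congr rfl this]
  simp

lemma entryM_map_toR (n : ℕ) (z : List α) (a : α) (m : ℕ) :
    (entryM n z a m).map toR = 1 + (RatFunc.X : RatFunc ℚ) ^ m • Em n z a := by
  ext i j
  simp only [Matrix.map_apply, Matrix.add_apply, Matrix.smul_apply, entryM, Em,
    Matrix.of_apply, Matrix.one_apply, smul_eq_mul]
  by_cases h1 : i = j
  · subst h1
    have hc : ¬ ((i : ℕ) = (i : ℕ) + 1 ∧ z[(i : ℕ)]? = some a) := by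
      rintro ⟨e, -⟩; omega
    rw [if_pos rfl, if_pos rfl, if_neg hc, map_one, mul_zero, add_zero]
  · rw [if_neg h1, if_neg h1]
    by_cases h2 : (j : ℕ) = (i : ℕ) + 1 ∧ z[(i : ℕ)]? = some a
    · rw [if_pos h2, if_pos h2, toR_X_pow, mul_one, zero_add]
    · rw [if_neg h2, if_neg h2, map_zero, mul_zero, add_zero]

lemma entryM_inv (n : ℕ) {z : List α} (hz : z.Chain' (· ≠ ·)) (a : α) (m : ℕ) :
    (entryM n z a m).map toR * (1 - (RatFunc.X : RatFunc ℚ) ^ m • Em n z a) = 1 := by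
  rw [entryM_map_toR, mul_sub, mul_one, Matrix.mul_smul, add_mul, one_mul,
    Matrix.smul_mul, Em_sq n hz a, smul_zero, add_zero, add_sub_cancel_right]

lemma entryM_shift (n : ℕ) (z : List α) (b : α) (m : ℕ) :
    Dm n * (entryM n z b (m+1)).map toR = (entryM n z b m).map toR * Dm n := by
  ext i j
  simp only [Dm, Matrix.diagonal_mul, Matrix.mul_diagonal, Matrix.map_apply, entryM,
    Matrix.of_apply]
  by_cases h1 : i = j
  · subst h1; simp
  · rw [if_neg h1, if_neg h1]
    by_cases h2 : (j : ℕ) = (i : ℕ) + 1 ∧ z[(i : ℕ)]? = some b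
    · rw [if_pos h2, if_pos h2, toR_X_pow, toR_X_pow, h2.1]
      ring
    · rw [if_neg h2, if_neg h2, map_zero, mul_zero, zero_mul]

lemma Pm_cons (n : ℕ) (z : List α) (b : α) (t : List α) :
    Pm n z (b :: t) = entryM n z b t.length * Pm n z t := rfl

lemma Pm_nil (n : ℕ) (z : List α) : Pm n z ([] : List α) = 1 := rfl

lemma Pm_nil_map (n : ℕ) (z : List α) : (Pm n z ([] : List α)).map toR = 1 := by
  rw [Pm_nil]
  exact Matrix.map_one _ (map_zero toR) (map_one toR)

lemma Pm_append (n : ℕ) (z : List α) (w : List α) (a : α) :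
    (Pm n z (w ++ [a])).map toR =
      Dinv n * ((Pm n z w).map toR * (Dm n * (entryM n z a 0).map toR)) := by
  induction w with
  | nil =>
    show (Pm n z [a]).map toR = _
    rw [Pm_cons, Matrix.map_mul, Pm_nil_map, mul_one, one_mul,
      List.length_nil, Dinv_cancel]
  | cons b t ih =>
    show (Pm n z (b :: (t ++ [a]))).map toR = _
    rw [Pm_cons, Matrix.map_mul, ih, List.length_append, List.length_singleton, Pm_cons,
      Matrix.map_mul]
    set S := (entryM n z b t.length).map toR
    set P := (Pm n z t).map toR
    set Q := Dm n * (entryM n z a 0).map toR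
    have hS : Dm n * (entryM n z b (t.length + 1)).map toR = S * Dm n :=
      entryM_shift n z b t.length
    calc (entryM n z b (t.length+1)).map toR * (Dinv n * (P * Q))
        = Dinv n * (Dm n * ((entryM n z b (t.length+1)).map toR * (Dinv n * (P * Q)))) := by
          rw [Dinv_cancel]
      _ = Dinv n * ((Dm n * (entryM n z b (t.length+1)).map toR) * (Dinv n * (P * Q))) := by
          rw [mul_assoc]
      _ = Dinv n * ((S * Dm n) * (Dinv n * (P * Q))) := by rw [hS]
      _ = Dinv n * (S * (Dm n * (Dinv n * (P * Q)))) := by rw [mul_assoc]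
      _ = Dinv n * (S * (P * Q)) := by rw [Dm_cancel]
      _ = Dinv n * (S * P * Q) := by rw [mul_assoc]

/-- candidate inverse matrix -/
noncomputable def Nn (n : ℕ) (z : List α) (u : List α) :
    Matrix (Fin (n+1)) (Fin (n+1)) (RatFunc ℚ) :=
  Matrix.of fun i j =>
    (-1 : RatFunc ℚ) ^ ((i : ℕ) + (j : ℕ)) *
      ((RatFunc.X : RatFunc ℚ) ^ ((j : ℕ) * u.length + (i : ℕ)) *
        ((RatFunc.X : RatFunc ℚ) ^ ((i : ℕ) * u.length + (j : ℕ)))⁻¹) *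
      toRinv (Pm n z u.reverse i j)

lemma sandwich_apply (n : ℕ) (N : Matrix (Fin (n+1)) (Fin (n+1)) (RatFunc ℚ))
    (k j : Fin (n+1)) :
    (Dinv n * (N * Dm n)) k j =
      ((RatFunc.X : RatFunc ℚ) ^ (k : ℕ))⁻¹ * (N k j * (RatFunc.X : RatFunc ℚ) ^ (j : ℕ)) := by
  rw [Dinv, Matrix.diagonal_mul, Dm, Matrix.mul_diagonal]

lemma Nn_nil (n : ℕ) (z : List α) : Nn n z ([] : List α) = 1 := by
  ext i j
  simp only [Nn, Matrix.of_apply, List.reverse_nil, Pm_nil]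
  by_cases h : i = j
  · subst h
    rw [Matrix.one_apply_eq, map_one, mul_one, Matrix.one_apply_eq,
      mul_inv_cancel₀ (Xpow_ne _), mul_one, ← two_mul, pow_mul]
    norm_num
  · rw [Matrix.one_apply_ne h, map_zero, mul_zero, Matrix.one_apply_ne h]

lemma Nn_append (n : ℕ) {z : List α} (hz : z.Chain' (· ≠ ·)) (w : List α) (a : α) :
    Nn n z (w ++ [a]) =
      (1 - (RatFunc.X : RatFunc ℚ) ^ (0:ℕ) • Em n z a) * (Dinv n * (Nn n z w * Dm n)) := by
  ext i j
  rw [pow_zero, one_smul, sub_mul, one_mul, Matrix.sub_apply, Em_mul_apply,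
    sandwich_apply]
  have hrev : (w ++ [a]).reverse = a :: w.reverse := by simp
  simp only [Nn, Matrix.of_apply, List.length_append, List.length_singleton, hrev]
  rw [Pm_cons, entryM_mul_apply, List.length_reverse]
  by_cases h : (i : ℕ) + 1 < n + 1 ∧ z[(i : ℕ)]? = some a
  · rw [dif_pos h, dif_pos h, sandwich_apply]
    simp only [map_add, map_mul, toRinv_X_pow, Fin.val_mk, Matrix.of_apply]
    set A := toRinv (Pm n z w.reverse i j)
    set B := toRinv (Pm n z w.reverse ⟨(i : ℕ) + 1, h.1⟩ j)
    have hX : (RatFunc.X : RatFunc ℚ) ≠ 0 := RatFunc.X_ne_zero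
    field_simp
    ring
  · rw [dif_neg h, dif_neg h, add_zero, sub_zero]
    set A := toRinv (Pm n z w.reverse i j)
    have hX : (RatFunc.X : RatFunc ℚ) ≠ 0 := RatFunc.X_ne_zero
    field_simp
    ring

lemma Pm_mul_Nn (n : ℕ) {z : List α} (hz : z.Chain' (· ≠ ·)) (u : List α) :
    (Pm n z u).map toR * Nn n z u = 1 := by
  induction u using List.reverseRecOn with
  | nil => rw [Pm_nil_map, Nn_nil, one_mul]
  | append_singleton w a ih =>
    rw [Pm_append, Nn_append n hz]
    set P := (Pm n z w).map toR
    set N := Nn n z w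
    set M₀ := (entryM n z a 0).map toR with hM₀
    have h1 : M₀ * (1 - (RatFunc.X : RatFunc ℚ) ^ (0:ℕ) • Em n z a) = 1 :=
      entryM_inv n hz a 0
    set E' := (1 : Matrix (Fin (n+1)) (Fin (n+1)) (RatFunc ℚ))
      - (RatFunc.X : RatFunc ℚ) ^ (0:ℕ) • Em n z a with hE'
    calc Dinv n * (P * (Dm n * M₀)) * (E' * (Dinv n * (N * Dm n)))
        = Dinv n * (P * (Dm n * (M₀ * (E' * (Dinv n * (N * Dm n)))))) := by
          simp only [mul_assoc]
      _ = Dinv n * (P * (Dm n * (Dinv n * (N * Dm n)))) := by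
          rw [← mul_assoc M₀ E', h1, one_mul]
      _ = Dinv n * (P * (N * Dm n)) := by rw [Dm_cancel]
      _ = Dinv n * Dm n := by rw [← mul_assoc P N, ih, one_mul]
      _ = 1 := Dinv_mul_Dm n

lemma Pm_lower (n : ℕ) (z : List α) :
    ∀ (w : List α) (i j : Fin (n+1)), (j : ℕ) < (i : ℕ) → Pm n z w i j = 0 := by
  intro w
  induction w with
  | nil =>
    intro i j hij
    rw [Pm_nil]
    exact Matrix.one_apply_ne (Fin.ne_of_val_ne (by omega))
  | cons b t ih =>
    intro i j hij
    rw [Pm_cons, entryM_mul_apply, ih i j hij]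
    split_ifs with h
    · rw [ih ⟨(i : ℕ) + 1, h.1⟩ j (Nat.lt_succ_of_lt hij), mul_zero, zero_add]
    · rw [zero_add]

lemma Pm_diag (n : ℕ) (z : List α) :
    ∀ (w : List α) (i : Fin (n+1)), Pm n z w i i = 1 := by
  intro w
  induction w with
  | nil =>
    intro i
    rw [Pm_nil]
    exact Matrix.one_apply_eq i
  | cons b t ih =>
    intro i
    rw [Pm_cons, entryM_mul_apply, ih i]
    split_ifs with h
    · rw [Pm_lower n z t ⟨(i : ℕ) + 1, h.1⟩ i (Nat.lt_succ_self _), mul_zero, add_zero]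
    · rw [add_zero]

end Stmt8Aux

/-- The inverse N of the q-Parikh matrix P_z(u) is upper unitriangular and, for i < j,
N_{i,j} = (-1)^{i+j} q^{(j-i)(|u|-1)} [P_z(ũ)]_{i,j}(1/q). -/
theorem stmt8 {α : Type*} [DecidableEq α] (z u : List α)
    (hz : z.Chain' (· ≠ ·)) (hu : ∀ a ∈ u, a ∈ z) :
    (∀ i j : Fin (z.length + 1), j < i → ((Pm z.length z u).map toR)⁻¹ i j = 0) ∧
    (∀ i : Fin (z.length + 1), ((Pm z.length z u).map toR)⁻¹ i i = 1) ∧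
    (∀ i j : Fin (z.length + 1), i < j →
      ((Pm z.length z u).map toR)⁻¹ i j =
        (-1 : RatFunc ℚ) ^ ((i : ℕ) + (j : ℕ)) *
          RatFunc.X ^ (((j : ℕ) - (i : ℕ)) * (u.length - 1)) *
            toRinv (Pm z.length z u.reverse i j)) := by
  have hinv : ((Pm z.length z u).map toR)⁻¹ = Stmt8Aux.Nn z.length z u :=
    Matrix.inv_eq_right_inv (Stmt8Aux.Pm_mul_Nn z.length hz u)
  refine ⟨?_, ?_, ?_⟩
  · intro i j hij
    have hij' : (j : ℕ) < (i : ℕ) := hij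
    rw [hinv]
    simp only [Stmt8Aux.Nn, Matrix.of_apply]
    rw [Stmt8Aux.Pm_lower z.length z u.reverse i j hij', map_zero, mul_zero]
  · intro i
    rw [hinv]
    simp only [Stmt8Aux.Nn, Matrix.of_apply]
    rw [Stmt8Aux.Pm_diag z.length z u.reverse i, map_one, mul_one,
      mul_inv_cancel₀ (Stmt8Aux.Xpow_ne _), mul_one, ← two_mul, pow_mul]
    norm_num
  · intro i j hij
    have hij' : (i : ℕ) < (j : ℕ) := hij
    rw [hinv]
    simp only [Stmt8Aux.Nn, Matrix.of_apply]
    rcases Nat.eq_zero_or_pos u.length with h0 | hpos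
    · have hu0 : u = [] := List.length_eq_zero_iff.mp h0
      subst hu0
      rw [List.reverse_nil, Stmt8Aux.Pm_nil,
        Matrix.one_apply_ne (Fin.ne_of_val_ne (by omega : (i : ℕ) ≠ (j : ℕ))),
        map_zero, mul_zero, mul_zero]
    · obtain ⟨d, hd⟩ : ∃ d, (j : ℕ) = (i : ℕ) + d := ⟨(j : ℕ) - (i : ℕ), by omega⟩
      obtain ⟨m, hm⟩ : ∃ m, u.length = m + 1 := ⟨u.length - 1, by omega⟩
      have key : (j : ℕ) * u.length + (i : ℕ)
          = ((j : ℕ) - (i : ℕ)) * (u.length - 1) + ((i : ℕ) * u.length + (j : ℕ)) := by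
        rw [hd, hm, Nat.add_sub_cancel_left, Nat.add_sub_cancel]
        ring
      have hXc : (RatFunc.X : RatFunc ℚ) ^ ((j : ℕ) * u.length + (i : ℕ)) *
          ((RatFunc.X : RatFunc ℚ) ^ ((i : ℕ) * u.length + (j : ℕ)))⁻¹ =
          RatFunc.X ^ (((j : ℕ) - (i : ℕ)) * (u.length - 1)) := by
        rw [key, pow_add, mul_assoc, mul_inv_cancel₀ (Stmt8Aux.Xpow_ne _), mul_one]
      rw [hXc]
end

section
/- Let z be a word of length ℓ and u a word over the alphabet of z. Then for all 1 ≤ i, j ≤ ℓ+1, [P_z(ũ)]_{i,j} = q^{(j−i)(|u|−1)} · [P_{z̃}(u)]_{ℓ+2−j, ℓ+2−i}(1/q), where z̃ and ũ denote the reversals of z and u. -/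
open Polynomial

section Helpers
variable {α : Type*} [DecidableEq α] (n : ℕ) (z : List α)

def fsucc (i : Fin (n+1)) : Fin (n+1) := ⟨min ((i:ℕ)+1) n, by omega⟩
def fpred (j : Fin (n+1)) : Fin (n+1) := ⟨(j:ℕ)-1, by omega⟩

noncomputable def Pmo (c : ℕ) : List α → Matrix (Fin (n+1)) (Fin (n+1)) (Polynomial ℕ)
  | [] => 1
  | a :: t => entryM n z a (t.length + c) * Pmo c t

variable {n z}

lemma entryM_mul (hz : z.length ≤ n) (a : α) (e : ℕ)
    (P : Matrix (Fin (n+1)) (Fin (n+1)) (Polynomial ℕ)) (i j : Fin (n+1)) :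
    (entryM n z a e * P) i j
      = P i j + if z[(i:ℕ)]? = some a then X ^ e * P (fsucc n i) j else 0 := by
  rw [Matrix.mul_apply]
  by_cases hc : z[(i:ℕ)]? = some a
  · have hi : (i:ℕ) < z.length := (List.getElem?_eq_some_iff.mp hc).1
    have hfs : ((fsucc n i : Fin (n+1)) : ℕ) = (i:ℕ) + 1 := by simp [fsucc]; omega
    have hne : fsucc n i ≠ i := fun h => by
      have h2 := congrArg Fin.val h
      rw [hfs] at h2
      omega
    rw [if_pos hc]
    have : ∀ k : Fin (n+1), entryM n z a e i k * P k j
        = (if k = i then P i j else 0) + (if k = fsucc n i then X ^ e * P (fsucc n i) j else 0) := by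
      intro k
      simp only [entryM, Matrix.of_apply]
      by_cases h1 : k = i
      · subst h1
        rw [if_pos rfl, if_pos rfl, if_neg (Ne.symm hne), one_mul, add_zero]
      · rw [if_neg h1, if_neg (fun h => h1 h.symm)]
        by_cases h2 : k = fsucc n i
        · subst h2
          rw [if_pos ⟨hfs, hc⟩, if_pos rfl, zero_add]
        · rw [if_neg (by rintro ⟨hk, -⟩; exact h2 (Fin.ext (by omega)) :
              ¬((k:ℕ) = (i:ℕ) + 1 ∧ z[(i:ℕ)]? = some a)), if_neg h2, zero_mul, add_zero]
    rw [Finset.sum_congr rfl (fun k _ => this k), Finset.sum_add_distrib,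
      Finset.sum_ite_eq', Finset.sum_ite_eq']
    simp
  · rw [if_neg hc, add_zero]
    have : ∀ k : Fin (n+1), entryM n z a e i k * P k j = (if i = k then P k j else 0) := by
      intro k
      simp only [entryM, Matrix.of_apply]
      by_cases h1 : i = k
      · rw [if_pos h1, if_pos h1, one_mul]
      · rw [if_neg h1, if_neg (fun h => hc h.2), zero_mul, if_neg h1]
    rw [Finset.sum_congr rfl (fun k _ => this k), Finset.sum_ite_eq]
    simp

lemma mul_entryM (a : α) (e : ℕ)
    (P : Matrix (Fin (n+1)) (Fin (n+1)) (Polynomial ℕ)) (i j : Fin (n+1)) :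
    (P * entryM n z a e) i j
      = P i j + if 1 ≤ (j:ℕ) ∧ z[(j:ℕ)-1]? = some a then X ^ e * P i (fpred n j) else 0 := by
  rw [Matrix.mul_apply]
  by_cases hc : 1 ≤ (j:ℕ) ∧ z[(j:ℕ)-1]? = some a
  · have hfp : ((fpred n j : Fin (n+1)) : ℕ) = (j:ℕ) - 1 := rfl
    have hne : fpred n j ≠ j := by
      intro h
      have := congrArg Fin.val h
      rw [hfp] at this; omega
    rw [if_pos hc]
    have : ∀ k : Fin (n+1), P i k * entryM n z a e k j
        = (if k = j then P i j else 0) + (if k = fpred n j then X ^ e * P i (fpred n j) else 0) := by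
      intro k
      simp only [entryM, Matrix.of_apply]
      by_cases h1 : k = j
      · subst h1
        rw [if_pos rfl, if_pos rfl, if_neg (Ne.symm hne), mul_one, add_zero]
      · rw [if_neg h1]
        by_cases h2 : k = fpred n j
        · subst h2
          rw [if_pos ⟨by omega, by rw [hfp]; exact hc.2⟩, if_neg h1, if_pos rfl, zero_add, mul_comm]
        · rw [if_neg (by rintro ⟨hk, -⟩; exact h2 (Fin.ext (by omega)) :
              ¬((j:ℕ) = (k:ℕ) + 1 ∧ z[(k:ℕ)]? = some a)), if_neg h1, if_neg h2, mul_zero, add_zero]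
    rw [Finset.sum_congr rfl (fun k _ => this k), Finset.sum_add_distrib,
      Finset.sum_ite_eq', Finset.sum_ite_eq']
    simp
  · rw [if_neg hc, add_zero]
    have : ∀ k : Fin (n+1), P i k * entryM n z a e k j = (if k = j then P i j else 0) := by
      intro k
      simp only [entryM, Matrix.of_apply]
      by_cases h1 : k = j
      · subst h1; rw [if_pos rfl, if_pos rfl, mul_one]
      · rw [if_neg h1, if_neg, mul_zero, if_neg h1]
        rintro ⟨hk, hg⟩
        exact hc ⟨by omega, by rwa [show (j:ℕ) - 1 = (k:ℕ) by omega]⟩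
    rw [Finset.sum_congr rfl (fun k _ => this k), Finset.sum_ite_eq']
    simp

lemma Pmo_tri (hz : z.length ≤ n) (c : ℕ) :
    ∀ (s : List α) (i j : Fin (n+1)), (j:ℕ) < (i:ℕ) → Pmo n z c s i j = 0 := by
  intro s
  induction s with
  | nil =>
    intro i j h
    exact Matrix.one_apply_ne (fun he => by rw [he] at h; omega)
  | cons a t ih =>
    intro i j h
    rw [Pmo, entryM_mul hz, ih i j h]
    have hi : (i:ℕ) ≤ n := by omega
    have hv : ((fsucc n i : Fin (n+1)) : ℕ) = min ((i:ℕ)+1) n := rfl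
    rw [ih (fsucc n i) j (by omega)]
    simp

lemma Pmo_shift (hz : z.length ≤ n) (c : ℕ) :
    ∀ (s : List α) (i j : Fin (n+1)),
      Pmo n z (c+1) s i j = X ^ ((j:ℕ) - (i:ℕ)) * Pmo n z c s i j := by
  intro s
  induction s with
  | nil =>
    intro i j
    by_cases h : i = j
    · subst h; simp [Pmo, Matrix.one_apply]
    · rw [show (Pmo n z (c+1) [] : Matrix _ _ _) = 1 from rfl,
        show (Pmo n z c [] : Matrix _ _ _) = 1 from rfl,
        Matrix.one_apply_ne h, mul_zero]
  | cons a t ih =>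
    intro i j
    rw [Pmo, Pmo, entryM_mul hz, entryM_mul hz, ih i j]
    by_cases hc : z[(i:ℕ)]? = some a
    · rw [if_pos hc, if_pos hc, ih (fsucc n i) j]
      have hi : (i:ℕ) < z.length := (List.getElem?_eq_some_iff.mp hc).1
      have hfs : ((fsucc n i : Fin (n+1)) : ℕ) = (i:ℕ) + 1 := by simp [fsucc]; omega
      by_cases hij : (j:ℕ) < (i:ℕ) + 1
      · rw [Pmo_tri hz c t (fsucc n i) j (by omega)]
        ring
      · rw [mul_add]
        congr 1
        rw [← mul_assoc, ← mul_assoc, ← pow_add, ← pow_add]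
        congr 2
        omega
    · rw [if_neg hc, if_neg hc, add_zero, add_zero]

lemma Pmo_append (c : ℕ) (a : α) :
    ∀ s : List α, Pmo n z c (s ++ [a]) = Pmo n z (c+1) s * entryM n z a c := by
  intro s
  induction s with
  | nil => simp [Pmo]
  | cons b t ih =>
    show Pmo n z c ((b :: (t ++ [a]))) = _
    rw [Pmo, ih, Pmo, mul_assoc,
      show (t ++ [a]).length + c = t.length + (c+1) by simp; omega]

lemma Pm_eq_Pmo : ∀ s : List α, Pm n z s = Pmo n z 0 s := by
  intro s
  induction s with
  | nil => rfl
  | cons a t ih => rw [Pm, Pmo, ih]; simp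

end Helpers

lemma toR_X : toR X = RatFunc.X := by simp [toR, coe_eval₂RingHom]
lemma toRinv_X : toRinv X = (RatFunc.X)⁻¹ := by simp [toRinv, coe_eval₂RingHom]

/-- [P_z(ũ)]_{i,j} = q^{(j-i)(|u|-1)} [P_{z̃}(u)]_{ℓ+2-j, ℓ+2-i}(1/q) for all i, j. -/
theorem stmt9 {α : Type*} [DecidableEq α] (z u : List α) (hu : ∀ a ∈ u, a ∈ z) :
    ∀ i j : Fin (z.length + 1),
      toR (Pm z.length z u.reverse i j)
        = RatFunc.X ^ (((j : ℤ) - (i : ℤ)) * ((u.length : ℤ) - 1)) *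
            toRinv (Pm z.length z.reverse u j.rev i.rev) := by
  clear hu
  induction u with
  | nil =>
    intro i j
    rw [List.reverse_nil]
    by_cases h : i = j
    · subst h
      rw [show (Pm z.length z [] : Matrix _ _ _) = 1 from rfl,
        show (Pm z.length z.reverse [] : Matrix _ _ _) = 1 from rfl,
        Matrix.one_apply_eq, Matrix.one_apply_eq, map_one, map_one]
      simp
    · rw [show (Pm z.length z [] : Matrix _ _ _) = 1 from rfl,
        show (Pm z.length z.reverse [] : Matrix _ _ _) = 1 from rfl,
        Matrix.one_apply_ne h, Matrix.one_apply_ne (fun hr => h (Fin.rev_inj.mp hr).symm),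
        map_zero, map_zero, mul_zero]
  | cons a t ih =>
    intro i j
    have hz : z.length ≤ z.length := le_refl _
    have hz' : z.reverse.length ≤ z.length := by simp
    have hjn : (j : ℕ) ≤ z.length := by omega
    have hin : (i : ℕ) ≤ z.length := by omega
    have hjrev : ((j.rev : Fin (z.length+1)) : ℕ) = z.length - (j:ℕ) := by simp [Fin.rev]
    have hirev : ((i.rev : Fin (z.length+1)) : ℕ) = z.length - (i:ℕ) := by simp [Fin.rev]
    by_cases hij : (j:ℕ) < (i:ℕ)
    · have h1 : Pm z.length z (a :: t).reverse i j = 0 := by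
        rw [Pm_eq_Pmo]; exact Pmo_tri hz 0 _ i j hij
      have h2 : Pm z.length z.reverse (a :: t) j.rev i.rev = 0 := by
        rw [Pm_eq_Pmo]; exact Pmo_tri hz' 0 _ _ _ (by omega)
      rw [h1, h2, map_zero, map_zero, mul_zero]
    · -- main flow
      rw [List.reverse_cons, Pm_eq_Pmo, Pmo_append, mul_entryM,
        Pmo_shift hz 0 t.reverse i j, Pmo_shift hz 0 t.reverse i (fpred z.length j),
        ← Pm_eq_Pmo,
        show Pm z.length z.reverse (a :: t) = entryM z.length z.reverse a t.length
          * Pm z.length z.reverse t from rfl,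
        entryM_mul hz']
      have hC : (z.reverse[((j.rev : Fin (z.length+1)) : ℕ)]? = some a)
          ↔ (1 ≤ (j:ℕ) ∧ z[(j:ℕ)-1]? = some a) := by
        by_cases hj1 : 1 ≤ (j:ℕ)
        · have heq : z.reverse[((j.rev : Fin (z.length+1)) : ℕ)]? = z[(j:ℕ)-1]? := by
            rw [hjrev,
              List.getElem?_reverse (by omega)]
            congr 1
            omega
          rw [heq]
          simp [hj1]
        · have heq : z.reverse[((j.rev : Fin (z.length+1)) : ℕ)]? = none := by
            rw [List.getElem?_eq_none]
            rw [List.length_reverse]; omega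
          rw [heq]
          simp [hj1]
      simp only [hC]
      by_cases hc : 1 ≤ (j:ℕ) ∧ z[(j:ℕ)-1]? = some a
      · rw [if_pos hc, if_pos hc]
        by_cases hij2 : (j:ℕ) - 1 < (i:ℕ)
        · -- then i = j, extra terms vanish
          have hA2 : Pm z.length z t.reverse i (fpred z.length j) = 0 := by
            rw [Pm_eq_Pmo]; exact Pmo_tri hz 0 _ _ _ hij2
          have hB2 : Pm z.length z.reverse t (fsucc z.length (j.rev)) i.rev = 0 := by
            rw [Pm_eq_Pmo]
            refine Pmo_tri hz' 0 _ _ _ ?_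
            have h1 : ((fsucc z.length (j.rev) : Fin (z.length+1)) : ℕ)
                = min (((j.rev : Fin (z.length+1)) : ℕ) + 1) z.length := rfl
            omega
          rw [hA2, hB2, mul_zero, mul_zero, mul_zero, add_zero, add_zero,
            map_mul, map_pow, toR_X, ih i j, ← mul_assoc,
            ← zpow_natCast (RatFunc.X : RatFunc ℚ) ((j:ℕ)-(i:ℕ)),
            ← zpow_add₀ RatFunc.X_ne_zero]
          congr 2
          have hd : (((j:ℕ) - (i:ℕ) : ℕ) : ℤ) = (j:ℤ) - (i:ℤ) := by omega
          rw [hd, List.length_cons]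
          push_cast
          ring
        · -- generic case
          have hfj : ((fpred z.length j : Fin (z.length+1)) : ℕ) = (j:ℕ) - 1 := rfl
          have hfjZ : ((fpred z.length j : Fin (z.length+1)) : ℤ) = (j:ℤ) - 1 := by omega
          have hrr : (fpred z.length j).rev = fsucc z.length (j.rev) := by
            apply Fin.ext
            have h1 : ((fsucc z.length (j.rev) : Fin (z.length+1)) : ℕ)
                = min (((j.rev : Fin (z.length+1)) : ℕ) + 1) z.length := rfl
            have h2 : (((fpred z.length j).rev : Fin (z.length+1)) : ℕ)
                = z.length - ((fpred z.length j : Fin (z.length+1)) : ℕ) := by simp [Fin.rev]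
            omega
          rw [← hrr, pow_zero, one_mul, map_add, map_mul, map_mul, map_pow, map_pow, toR_X,
            map_add, map_mul, map_pow, toRinv_X, ih i j, ih i (fpred z.length j), hfjZ,
            mul_add]
          congr 1
          · rw [← mul_assoc, ← zpow_natCast (RatFunc.X : RatFunc ℚ) ((j:ℕ)-(i:ℕ)),
              ← zpow_add₀ RatFunc.X_ne_zero]
            congr 2
            have hd : (((j:ℕ) - (i:ℕ) : ℕ) : ℤ) = (j:ℤ) - (i:ℤ) := by omega
            rw [hd, List.length_cons]
            push_cast
            ring
          · rw [← mul_assoc, ← zpow_natCast (RatFunc.X : RatFunc ℚ) (((fpred z.length j):ℕ)-(i:ℕ)),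
              ← zpow_add₀ RatFunc.X_ne_zero,
              show ((RatFunc.X : RatFunc ℚ)⁻¹)^t.length = RatFunc.X ^ (-(t.length:ℤ)) by
                rw [inv_pow, ← zpow_natCast, ← zpow_neg],
              ← mul_assoc, ← zpow_add₀ RatFunc.X_ne_zero]
            congr 2
            have hd : ((((fpred z.length j):ℕ) - (i:ℕ) : ℕ) : ℤ)
                = (j:ℤ) - 1 - (i:ℤ) := by rw [hfj]; omega
            rw [hd, List.length_cons]
            push_cast
            ring
      · rw [if_neg hc, if_neg hc, add_zero, add_zero, map_mul, map_pow, toR_X, ih i j,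
          ← mul_assoc, ← zpow_natCast (RatFunc.X : RatFunc ℚ) ((j:ℕ)-(i:ℕ)),
          ← zpow_add₀ RatFunc.X_ne_zero]
        congr 2
        have hd : (((j:ℕ) - (i:ℕ) : ℕ) : ℤ) = (j:ℤ) - (i:ℤ) := by omega
        rw [hd, List.length_cons]
        push_cast
        ring
end

section
/- Let z = z_1⋯z_ℓ be a word with z_i ≠ z_{i+1} for all 1 ≤ i < ℓ, and u a word over the alphabet of z. Then the inverse of P_z(u) equals the Hadamard product of the sign matrix ((−1)^{i+j})_{i,j} with the antitranspose of P_{z̃}(u); i.e., [P_z(u)^{-1}]_{i,j} = (−1)^{i+j} [P_{z̃}(u)]_{ℓ+2−j, ℓ+2−i}. -/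
open Polynomial

/-! ### Auxiliary machinery -/


/-- Signed antitranspose. -/
noncomputable def Fm (n : ℕ) (A : Matrix (Fin (n+1)) (Fin (n+1)) (RatFunc ℚ)) :
    Matrix (Fin (n+1)) (Fin (n+1)) (RatFunc ℚ) :=
  Matrix.of fun i j => (-1 : RatFunc ℚ) ^ ((i : ℕ) + (j : ℕ)) * A j.rev i.rev

lemma Fm_one (n : ℕ) : Fm n 1 = 1 := by
  ext i j
  simp only [Fm, Matrix.of_apply, Matrix.one_apply, Fin.rev_inj]
  rcases eq_or_ne i j with h | h
  · subst h
    simp [← two_mul, pow_mul]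
  · simp [h, Ne.symm h]

lemma neg_one_pow_cancel (a b r : ℕ) :
    ((-1 : RatFunc ℚ)) ^ (a + r) * (-1 : RatFunc ℚ) ^ (r + b) = (-1) ^ (a + b) := by
  rw [← pow_add]
  have h : a + r + (r + b) = (a + b) + 2 * r := by ring
  rw [h, pow_add, pow_mul]
  norm_num

lemma Fm_mul (n : ℕ) (A B : Matrix (Fin (n+1)) (Fin (n+1)) (RatFunc ℚ)) :
    Fm n (A * B) = Fm n B * Fm n A := by
  ext i j
  simp only [Fm, Matrix.of_apply, Matrix.mul_apply, Finset.mul_sum]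
  rw [← Equiv.sum_comp (Fin.revPerm (n := n+1))
    (fun k => ((-1:RatFunc ℚ) ^ ((i:ℕ) + (k:ℕ)) * B k.rev i.rev) *
      ((-1:RatFunc ℚ) ^ ((k:ℕ) + (j:ℕ)) * A j.rev k.rev))]
  refine Finset.sum_congr rfl fun k _ => ?_
  simp only [Fin.revPerm_apply, Fin.rev_rev]
  rw [show ((-1:RatFunc ℚ) ^ ((i:ℕ) + (k.rev:ℕ)) * B k i.rev) *
      ((-1:RatFunc ℚ) ^ ((k.rev:ℕ) + (j:ℕ)) * A j.rev k)
      = ((-1:RatFunc ℚ) ^ ((i:ℕ) + (k.rev:ℕ)) * (-1:RatFunc ℚ) ^ ((k.rev:ℕ) + (j:ℕ))) *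
        (A j.rev k * B k i.rev) from by ring,
    neg_one_pow_cancel]

/-- The nilpotent part over `RatFunc ℚ`. -/
noncomputable def Nm {α : Type*} [DecidableEq α] (n : ℕ) (z : List α) (d : α) (j : ℕ) :
    Matrix (Fin (n+1)) (Fin (n+1)) (RatFunc ℚ) :=
  Matrix.of fun i i' =>
    if (i' : ℕ) = (i : ℕ) + 1 ∧ z[(i : ℕ)]? = some d then RatFunc.X ^ j else 0

lemma toR_X_pow (j : ℕ) : toR ((X : Polynomial ℕ) ^ j) = RatFunc.X ^ j := by
  simp [toR]

lemma entryM_map {α : Type*} [DecidableEq α] (n : ℕ) (z : List α) (d : α) (j : ℕ) :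
    (entryM n z d j).map toR = 1 + Nm n z d j := by
  ext i i'
  simp only [entryM, Nm, Matrix.map_apply, Matrix.of_apply, Matrix.add_apply, Matrix.one_apply]
  rcases eq_or_ne i i' with h | h
  · subst h
    rw [if_pos rfl, if_pos rfl, map_one, if_neg (by rintro ⟨h1, -⟩; omega), add_zero]
  · rw [if_neg h, if_neg h, zero_add]
    split
    · rw [toR_X_pow]
    · simp

lemma Nm_sq {α : Type*} [DecidableEq α] (z : List α) (hz : z.Chain' (· ≠ ·)) (d : α) (j : ℕ) :
    Nm z.length z d j * Nm z.length z d j = 0 := by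
  ext i i''
  simp only [Matrix.mul_apply, Matrix.zero_apply]
  refine Finset.sum_eq_zero fun k _ => ?_
  simp only [Nm, Matrix.of_apply]
  rcases Decidable.em ((k : ℕ) = (i : ℕ) + 1 ∧ z[(i : ℕ)]? = some d) with h1 | h1
  · rcases Decidable.em (((i'' : ℕ) = (k : ℕ) + 1) ∧ z[(k : ℕ)]? = some d) with h2 | h2
    · exfalso
      obtain ⟨hk, hzi⟩ := h1
      obtain ⟨-, hzk⟩ := h2
      have hi : (i : ℕ) < z.length := by
        by_contra hlt
        rw [List.getElem?_eq_none (by omega)] at hzi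
        exact nomatch hzi
      have hk' : (k : ℕ) < z.length := by
        by_contra hlt
        rw [List.getElem?_eq_none (by omega)] at hzk
        exact nomatch hzk
      rw [List.getElem?_eq_getElem hi] at hzi
      rw [List.getElem?_eq_getElem hk'] at hzk
      have e1 : z.get ⟨(i:ℕ), hi⟩ = d := Option.some_inj.1 hzi
      have e2 : z.get ⟨(k:ℕ), hk'⟩ = d := Option.some_inj.1 hzk
      have hch := List.isChain_iff_getElem.1 hz (i : ℕ) (by omega)
      apply hch
      have he : (⟨(i:ℕ)+1, by omega⟩ : Fin z.length) = ⟨(k:ℕ), hk'⟩ := Fin.ext (by simp only [Fin.val_mk]; omega)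
      rw [show z[(i:ℕ)] = d from e1]
      calc d = z.get ⟨(k:ℕ), hk'⟩ := e2.symm
        _ = z.get ⟨(i:ℕ)+1, by omega⟩ := by rw [he]
    · rw [if_neg h2, mul_zero]
  · rw [if_neg h1, zero_mul]

lemma Fm_entryM {α : Type*} [DecidableEq α] (z : List α) (d : α) (j : ℕ) :
    Fm z.length ((entryM z.length z.reverse d j).map toR) = 1 - Nm z.length z d j := by
  set n := z.length with hn
  ext i i'
  have hbi : (i : ℕ) < n + 1 := i.isLt
  have hbi' : (i' : ℕ) < n + 1 := i'.isLt
  have hvi : (i.rev : ℕ) = n - (i : ℕ) := by rw [Fin.val_rev]; omega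
  have hvi' : (i'.rev : ℕ) = n - (i' : ℕ) := by rw [Fin.val_rev]; omega
  simp only [Fm, entryM, Nm, Matrix.map_apply, Matrix.of_apply, Matrix.sub_apply,
    Matrix.one_apply]
  rcases eq_or_ne i i' with h | h
  · subst h
    rw [if_pos rfl, if_pos rfl, if_neg (by rintro ⟨h1, -⟩; omega), sub_zero, map_one, mul_one,
      ← two_mul, pow_mul]
    norm_num
  · have hrev : i'.rev ≠ i.rev := fun hc => h (Fin.rev_inj.1 hc).symm
    rw [if_neg hrev, if_neg h]
    rcases Decidable.em (((i' : ℕ) = (i : ℕ) + 1) ∧ z[(i : ℕ)]? = some d) with hc | hc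
    · obtain ⟨hii', hzi⟩ := hc
      have hi : (i : ℕ) < n := by
        by_contra hlt
        rw [List.getElem?_eq_none (by omega)] at hzi
        exact nomatch hzi
      have hcond : ((i.rev : ℕ) = (i'.rev : ℕ) + 1) ∧ z.reverse[(i'.rev : ℕ)]? = some d := by
        refine ⟨by omega, ?_⟩
        have hlt : (i'.rev : ℕ) < z.length := by omega
        rw [List.getElem?_reverse hlt]
        have he : z.length - 1 - (i'.rev : ℕ) = (i : ℕ) := by omega
        rw [he]; exact hzi
      rw [if_pos hcond, if_pos ⟨hii', hzi⟩, toR_X_pow]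
      have he : (i : ℕ) + (i' : ℕ) = 2 * (i : ℕ) + 1 := by omega
      rw [he, pow_succ, pow_mul]
      norm_num
    · have hcond : ¬ (((i.rev : ℕ) = (i'.rev : ℕ) + 1) ∧
          z.reverse[(i'.rev : ℕ)]? = some d) := by
        rintro ⟨h1, h2⟩
        have hlt : (i'.rev : ℕ) < z.length := by omega
        rw [List.getElem?_reverse hlt] at h2
        refine hc ⟨by omega, ?_⟩
        have he : z.length - 1 - (i'.rev : ℕ) = (i : ℕ) := by omega
        rw [← he]; exact h2
      rw [if_neg hcond, if_neg hc, map_zero, mul_zero, sub_zero]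

lemma key_right_inv {α : Type*} [DecidableEq α] (z : List α) (hz : z.Chain' (· ≠ ·))
    (u : List α) :
    (Pm z.length z u).map toR * Fm z.length ((Pm z.length z.reverse u).map toR) = 1 := by
  induction u with
  | nil =>
      show ((1 : Matrix _ _ _).map toR) * Fm z.length ((1 : Matrix _ _ _).map toR) = 1
      rw [Matrix.map_one toR (map_zero _) (map_one _), Fm_one, one_mul]
  | cons a t ih =>
      show (entryM z.length z a t.length * Pm z.length z t).map toR *
        Fm z.length ((entryM z.length z.reverse a t.length * Pm z.length z.reverse t).map toR)
          = 1
      rw [Matrix.map_mul, Matrix.map_mul, Fm_mul, mul_assoc,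
        ← mul_assoc ((Pm z.length z t).map toR), ih, one_mul, entryM_map, Fm_entryM]
      have hsq := Nm_sq z hz a t.length
      have hexp : (1 + Nm z.length z a t.length) * (1 - Nm z.length z a t.length)
          = 1 - Nm z.length z a t.length * Nm z.length z a t.length := by noncomm_ring
      rw [hexp, hsq, sub_zero]

/-- P_z(u)⁻¹ equals the Hadamard product of the sign matrix with the antitranspose of
P_{z̃}(u): [P_z(u)⁻¹]_{i,j} = (-1)^{i+j} [P_{z̃}(u)]_{ℓ+2-j, ℓ+2-i}. -/
theorem stmt10 {α : Type*} [DecidableEq α] (z u : List α)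
    (hz : z.Chain' (· ≠ ·)) (hu : ∀ a ∈ u, a ∈ z) :
    ∀ i j : Fin (z.length + 1),
      ((Pm z.length z u).map toR)⁻¹ i j =
        (-1 : RatFunc ℚ) ^ ((i : ℕ) + (j : ℕ)) *
          toR (Pm z.length z.reverse u j.rev i.rev) := by
  intro i j
  rw [Matrix.inv_eq_right_inv (key_right_inv z hz u)]
  simp [Fm, Matrix.map_apply]
end

section
/- Let z be a word of length ℓ over alphabet A and let u = u_m⋯u_0 be a word over A. Define H_{z,k}(u) = P_z(u) ⊙ Pow_z(k), where Pow_z(k) is the (ℓ+1)×(ℓ+1) matrix with entries q^{(j−i)k} for i ≤ j and 0 for i > j. Then H_{z,k}(u) = M_{u_m, k+m} · M_{u_{m−1}, k+m−1} ⋯ M_{u_0, k}. -/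
/-!
Taking the Hadamard product with `Pow_z(k)` is multiplicative on upper triangular matrices,
because `q^{(l-i)k} q^{(j-l)k} = q^{(j-i)k}` for `i ≤ l ≤ j`, and it turns each factor `M_{d,j}`
into `M_{d,k+j}`, since `M_{d,j}` lives on the diagonal and the first superdiagonal.
-/

open Polynomial

/-- The matrix Pow_z(k) with entries q^{(j-i)k} above (and on) the diagonal, 0 below. -/
noncomputable def PowM (n k : ℕ) : Matrix (Fin (n+1)) (Fin (n+1)) (Polynomial ℕ) :=
  Matrix.of fun i j => if i ≤ j then X ^ (((j : ℕ) - (i : ℕ)) * k) else 0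

/-- The shifted product M_{u_m, k+m} ⋯ M_{u_0, k}. -/
noncomputable def PmShift {α : Type*} [DecidableEq α] (n : ℕ) (z : List α) (k : ℕ) :
    List α → Matrix (Fin (n+1)) (Fin (n+1)) (Polynomial ℕ)
  | [] => 1
  | a :: t => entryM n z a (k + t.length) * PmShift n z k t

open scoped Matrix

section
variable {α : Type*} [DecidableEq α] {n : ℕ}

lemma entryM_blockTriangular (z : List α) (d : α) (j : ℕ) :
    (entryM n z d j).BlockTriangular id := by
  intro i i' hlt
  have hne : i ≠ i' := fun h => (lt_irrefl i) (h ▸ hlt)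
  have hsucc : (i' : ℕ) ≠ i + 1 := by simp only [id] at hlt; omega
  simp [entryM, hne, hsucc]

lemma Pm_blockTriangular (z u : List α) : (Pm n z u).BlockTriangular id := by
  induction u with
  | nil => exact Matrix.blockTriangular_one
  | cons a t ih => exact (entryM_blockTriangular z a _).mul ih

lemma hadamard_PowM_mul (k : ℕ) {A B : Matrix (Fin (n+1)) (Fin (n+1)) ℕ[X]}
    (hA : A.BlockTriangular id) (hB : B.BlockTriangular id) :
    (A * B) ⊙ PowM n k = (A ⊙ PowM n k) * (B ⊙ PowM n k) := by
  refine Matrix.ext fun i j => ?_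
  simp only [Matrix.hadamard_apply, Matrix.mul_apply, Finset.sum_mul]
  refine Finset.sum_congr rfl fun l _ => ?_
  rcases lt_or_ge l i with hli | hil
  · simp [hA hli]
  rcases lt_or_ge j l with hjl | hlj
  · simp [hB hjl]
  have hexp : ((j : ℕ) - (i : ℕ)) * k = ((l : ℕ) - (i : ℕ)) * k + ((j : ℕ) - (l : ℕ)) * k := by
    rw [← add_mul]; congr 1; omega
  simp only [PowM, Matrix.of_apply, if_pos hil, if_pos hlj, if_pos (hil.trans hlj), hexp, pow_add]
  ring

lemma one_hadamard_PowM (k : ℕ) : (1 : Matrix (Fin (n+1)) (Fin (n+1)) ℕ[X]) ⊙ PowM n k = 1 := by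
  refine Matrix.ext fun i j => ?_
  by_cases h : i = j
  · subst h; simp [PowM]
  · simp [PowM, h]

lemma entryM_hadamard_PowM (z : List α) (d : α) (j k : ℕ) :
    entryM n z d j ⊙ PowM n k = entryM n z d (k + j) := by
  refine Matrix.ext fun i i' => ?_
  by_cases h : i = i'
  · subst h; simp [entryM, PowM]
  · by_cases hs : (i' : ℕ) = i + 1 ∧ z[(i : ℕ)]? = some d
    · have hle : i ≤ i' := Fin.le_def.2 (by omega)
      simp [entryM, PowM, h, hs, hle, ← pow_add, add_comm]
    · simp [entryM, PowM, h, hs]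

end

theorem stmt11_general {α : Type*} [DecidableEq α] (z u : List α) (k : ℕ) :
    Matrix.hadamard (Pm z.length z u) (PowM z.length k) = PmShift z.length z k u := by
  induction u with
  | nil => exact one_hadamard_PowM k
  | cons a t ih =>
    rw [Pm, PmShift, hadamard_PowM_mul k (entryM_blockTriangular z a _) (Pm_blockTriangular z t),
      entryM_hadamard_PowM, ih]

/-- H_{z,k}(u) := P_z(u) ⊙ Pow_z(k) equals M_{u_m,k+m} ⋯ M_{u_0,k}. -/
theorem stmt11 {α : Type*} [DecidableEq α] (z u : List α) (k : ℕ) (hu : ∀ a ∈ u, a ∈ z) :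
    Matrix.hadamard (Pm z.length z u) (PowM z.length k) = PmShift z.length z k u :=
  stmt11_general z u k
end

section
/- Let z be a word of length ℓ over alphabet A, u a word over A, and n a positive integer. Then P_z(u^n) = H_{z,(n−1)|u|}(u) · H_{z,(n−2)|u|}(u) ⋯ H_{z,|u|}(u) · H_{z,0}(u), where H_{z,k}(u) is the Hadamard product of P_z(u) with the matrix whose (i,j) entry is q^{(j−i)k} for i ≤ j and 0 otherwise. -/
open Polynomial

/-- The product H_{z,(m-1)|u|}(u) ⋯ H_{z,|u|}(u) · H_{z,0}(u), where
H_{z,k}(u) = P_z(u) ⊙ Pow_z(k). -/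
noncomputable def Hprod {α : Type*} [DecidableEq α] (z u : List α) :
    ℕ → Matrix (Fin (z.length + 1)) (Fin (z.length + 1)) (Polynomial ℕ)
  | 0 => 1
  | m + 1 =>
      Matrix.hadamard (Pm z.length z u) (PowM z.length (m * u.length)) * Hprod z u m

/-- The diagonal matrix with entries X^{i·k}. -/
noncomputable def Dm (n k : ℕ) : Matrix (Fin (n+1)) (Fin (n+1)) (Polynomial ℕ) :=
  Matrix.diagonal fun i => (X : Polynomial ℕ) ^ ((i : ℕ) * k)

lemma Dm_cancel {n k : ℕ} {A B : Matrix (Fin (n+1)) (Fin (n+1)) (Polynomial ℕ)}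
    (h : Dm n k * A = Dm n k * B) : A = B := by
  apply Matrix.ext
  intro i j
  have h1 : (Dm n k * A) i j = (Dm n k * B) i j := by rw [h]
  simp only [Dm, Matrix.diagonal_mul] at h1
  apply Polynomial.ext
  intro d
  have := congrArg (fun r => Polynomial.coeff r (d + (i : ℕ) * k)) h1
  simpa [Polynomial.coeff_X_pow_mul] using this

/-- Pm is upper triangular. -/
lemma Pm_tri {α : Type*} [DecidableEq α] (n : ℕ) (z : List α) :
    ∀ (w : List α) (i j : Fin (n+1)), (j : ℕ) < (i : ℕ) → Pm n z w i j = 0 := by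
  intro w
  induction w with
  | nil =>
    intro i j hij
    exact Matrix.one_apply_ne (by intro h; subst h; omega)
  | cons a t ih =>
    intro i j hij
    show (entryM n z a t.length * Pm n z t) i j = 0
    rw [Matrix.mul_apply]
    apply Finset.sum_eq_zero
    intro k _
    simp only [entryM, Matrix.of_apply]
    by_cases h1 : i = k
    · rw [if_pos h1, one_mul, ih k j (h1 ▸ hij)]
    · rw [if_neg h1]
      by_cases h2 : (k : ℕ) = (i : ℕ) + 1 ∧ z[(i : ℕ)]? = some a
      · have hk : (j : ℕ) < (k : ℕ) := by omega
        rw [if_pos h2, ih k j hk, mul_zero]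
      · rw [if_neg h2, zero_mul]

lemma Dm_entryM {α : Type*} [DecidableEq α] (n : ℕ) (z : List α) (a : α) (j k : ℕ) :
    Dm n k * entryM n z a (j + k) = entryM n z a j * Dm n k := by
  apply Matrix.ext
  intro i i'
  simp only [Dm, Matrix.diagonal_mul, Matrix.mul_diagonal, entryM, Matrix.of_apply]
  split_ifs with h1 h2
  · subst h1; ring
  · obtain ⟨h2, -⟩ := h2
    rw [← pow_add, ← pow_add]
    congr 1
    rw [h2, Nat.add_mul]
    omega
  · simp

lemma Dm_key {α : Type*} [DecidableEq α] (n : ℕ) (z : List α) :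
    ∀ (u w : List α),
      Dm n w.length * Pm n z (u ++ w) = Pm n z u * (Dm n w.length * Pm n z w) := by
  intro u w
  induction u with
  | nil => simp [Pm]
  | cons a t ih =>
    show Dm n w.length * (entryM n z a (t ++ w).length * Pm n z (t ++ w))
        = (entryM n z a t.length * Pm n z t) * (Dm n w.length * Pm n z w)
    rw [List.length_append, ← mul_assoc, Dm_entryM, mul_assoc, ih, ← mul_assoc]

lemma Dm_hadamard {n k : ℕ} {P : Matrix (Fin (n+1)) (Fin (n+1)) (Polynomial ℕ)}
    (hP : ∀ i j : Fin (n+1), (j : ℕ) < (i : ℕ) → P i j = 0) :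
    Dm n k * Matrix.hadamard P (PowM n k) = P * Dm n k := by
  apply Matrix.ext
  intro i j
  simp only [Dm, Matrix.diagonal_mul, Matrix.mul_diagonal, Matrix.hadamard_apply,
    PowM, Matrix.of_apply]
  by_cases h : i ≤ j
  · rw [if_pos h, mul_comm (P i j), ← mul_assoc, ← pow_add]
    have he : (i : ℕ) * k + ((j : ℕ) - (i : ℕ)) * k = (j : ℕ) * k := by
      have hle : (i : ℕ) ≤ (j : ℕ) := h
      rw [← Nat.add_mul]
      congr 1
      omega
    rw [he, mul_comm]
  · have hij : (j : ℕ) < (i : ℕ) := by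
      have := lt_of_not_ge h
      exact this
    rw [if_neg h, hP i j hij]
    simp

lemma Pm_append {α : Type*} [DecidableEq α] (n : ℕ) (z : List α) (u w : List α) :
    Pm n z (u ++ w) = Matrix.hadamard (Pm n z u) (PowM n w.length) * Pm n z w := by
  apply Dm_cancel (k := w.length)
  rw [Dm_key, ← mul_assoc, ← mul_assoc, Dm_hadamard (Pm_tri n z u)]

lemma replicate_flatten_length {α : Type*} (m : ℕ) (u : List α) :
    ((List.replicate m u).flatten).length = m * u.length := by
  induction m with
  | zero => simp
  | succ p ih => simp [List.replicate_succ, ih, Nat.succ_mul]; omega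

/-- P_z(uⁿ) = H_{z,(n-1)|u|}(u) ⋯ H_{z,|u|}(u) · H_{z,0}(u) for n ≥ 1. -/
theorem stmt12 {α : Type*} [DecidableEq α] (z u : List α) (n : ℕ) (hn : 0 < n)
    (hu : ∀ a ∈ u, a ∈ z) :
    Pm z.length z ((List.replicate n u).flatten) = Hprod z u n := by
  clear hn hu
  induction n with
  | zero => simp [Pm, Hprod]
  | succ m ih =>
    rw [List.replicate_succ, List.flatten_cons, Pm_append,
      replicate_flatten_length, ih]
    rfl
end

section
/- Let x = ⋯x_2 x_1 x_0 be a left-infinite word and z a finite word. For every r ≥ 0 and all n ≥ r + |z| − 1, the coefficient of q^r in (x_n⋯x_0 choose z)_q is the same; i.e., the sequence n ↦ [q^r](x_n⋯x_0 choose z)_q is eventually constant, becoming constant at latest from index r + |z| − 1 onwards. -/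
open Polynomial

/-- The prefix x_{n-1} ⋯ x_1 x_0 (length n, in natural reading order) of the
left-infinite word ⋯x_2 x_1 x_0. -/
def prefW {α : Type*} (x : ℕ → α) (n : ℕ) : List α :=
  ((List.range n).map x).reverse

lemma qBaux_append_coeff {α : Type*} [DecidableEq α] :
    ∀ (u v t : List α) (r : ℕ), r + v.length ≤ u.length →
      (qBaux (u ++ t) v).coeff r = (qBaux u v).coeff r := by
  intro u
  induction u with
  | nil =>
    intro v t r h
    match v with
    | [] => simp [qBaux]
    | b :: vv => simp at h
  | cons a uu ih =>
    intro v t r h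
    match v with
    | [] => simp [qBaux]
    | b :: vv =>
      simp only [List.cons_append, qBaux, List.append_eq, coeff_add, coeff_mul_X_pow']
      have h1 : r + (b :: vv).length ≤ uu.length + 1 := by simpa using h
      by_cases hle : vv.length + 1 ≤ r
      · have h2 : (r - (vv.length + 1)) + (b :: vv).length ≤ uu.length := by
          simp only [List.length_cons] at h1 ⊢
          omega
        have h3 : r + vv.length ≤ uu.length := by
          simp only [List.length_cons] at h1; omega
        rw [if_pos hle, if_pos hle, ih (b :: vv) t _ h2]
        congr 1
        by_cases hab : a = b
        · rw [if_pos hab, if_pos hab, ih vv t r h3]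
        · rw [if_neg hab, if_neg hab]
      · rw [if_neg hle, if_neg hle]
        congr 1
        have h3 : r + vv.length ≤ uu.length := by
          simp only [List.length_cons] at h1; omega
        by_cases hab : a = b
        · rw [if_pos hab, if_pos hab, ih vv t r h3]
        · rw [if_neg hab, if_neg hab]

lemma qB_prefW_coeff {α : Type*} [DecidableEq α] (x : ℕ → α) (z : List α) (r m : ℕ)
    (hm : r + z.length ≤ m) :
    (qB (prefW x m) z).coeff r = (qB (prefW x (r + z.length)) z).coeff r := by
  unfold qB prefW
  rw [List.reverse_reverse, List.reverse_reverse]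
  have hsplit : (List.range m).map x =
      (List.range (r + z.length)).map x ++ ((List.range m).map x).drop (r + z.length) := by
    conv_lhs => rw [← List.take_append_drop (r + z.length) ((List.range m).map x)]
    congr 1
    rw [← List.map_take, List.take_range, Nat.min_eq_left hm]
  rw [hsplit, qBaux_append_coeff]
  simp [hm]

/-- For a left-infinite word x, the coefficient of q^r in (x_n ⋯ x_0 choose z)_q is the
same for all n ≥ r + |z| - 1 (i.e. for all prefixes of length ≥ r + |z|). -/
theorem stmt14 {α : Type*} [DecidableEq α] (x : ℕ → α) (z : List α) (r m m' : ℕ)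
    (hm : r + z.length ≤ m) (hm' : r + z.length ≤ m') :
    (qB (prefW x m) z).coeff r = (qB (prefW x m') z).coeff r := by
  rw [qB_prefW_coeff x z r m hm, qB_prefW_coeff x z r m' hm']
end

section
/- For any nonempty finite words u and z, the sequence of polynomials n ↦ (u^n choose z)_q satisfies a linear recurrence relation with coefficients in Z[q] (constant in n). In particular, evaluating at q = 1, the integer sequence n ↦ (u^n choose z) satisfies a linear recurrence with constant integer coefficients. -/
open Polynomial

/-- View a polynomial with natural coefficients as a polynomial with integer coefficients. -/
noncomputable def toZnat : Polynomial ℕ →+* Polynomial ℤ :=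
  Polynomial.mapRingHom (Nat.castRingHom ℤ)

set_option linter.unusedSectionVars false
set_option linter.unusedVariables false

section
variable {α : Type*} [DecidableEq α]

noncomputable def Vvec (z : List α) (w : List α) : Fin (z.length + 1) → Polynomial ℤ :=
  fun i => toZnat (qBaux w (z.reverse.drop i))

noncomputable def Mstep (z : List α) (a : α) :
    Matrix (Fin (z.length + 1)) (Fin (z.length + 1)) (Polynomial ℤ) := fun i j =>
  (if j = i then X ^ (z.length - (i : ℕ)) else 0) +
  (if ((j : ℕ) = (i : ℕ) + 1 ∧ z.reverse.getD (i : ℕ) a = a) then 1 else 0)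

lemma qBaux_nil (u : List α) : qBaux u ([] : List α) = 1 := by
  cases u <;> rfl

lemma step (z : List α) (a : α) (w : List α) :
    Vvec z (a :: w) = (Mstep z a).mulVec (Vvec z w) := by
  funext i
  have hzr : z.reverse.length = z.length := z.length_reverse
  have hsum : (Mstep z a).mulVec (Vvec z w) i =
      X ^ (z.length - (i : ℕ)) * Vvec z w i +
      ∑ j : Fin (z.length + 1),
        (if ((j : ℕ) = (i : ℕ) + 1 ∧ z.reverse.getD (i : ℕ) a = a) then Vvec z w j else 0) := by
    simp [Matrix.mulVec, dotProduct, Mstep, add_mul, ite_mul, Finset.sum_add_distrib,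
      Finset.sum_ite_eq' Finset.univ i]
  rw [hsum]
  by_cases hi : (i : ℕ) < z.length
  · have hdrop : z.reverse.drop i = z.reverse[(i : ℕ)]'(by omega) :: z.reverse.drop ((i : ℕ) + 1) :=
      List.drop_eq_getElem_cons (by omega)
    set i' : Fin (z.length + 1) := ⟨(i : ℕ) + 1, by omega⟩ with hi'
    have hsum2 : ∑ j : Fin (z.length + 1),
        (if ((j : ℕ) = (i : ℕ) + 1 ∧ z.reverse.getD (i : ℕ) a = a) then Vvec z w j else 0)
        = if z.reverse.getD (i : ℕ) a = a then Vvec z w i' else 0 := by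
      rw [Finset.sum_congr rfl (g := fun j => if j = i' ∧ z.reverse.getD (i : ℕ) a = a then Vvec z w j else 0)
        (fun j _ => by simp [Fin.ext_iff, hi'])]
      simp [ite_and, Finset.sum_ite_eq' Finset.univ i']
    rw [hsum2]
    have hgd : z.reverse.getD (i : ℕ) a = z.reverse[(i : ℕ)]'(by omega) :=
      List.getD_eq_getElem _ _ (by omega)
    have hlen : (z.reverse.drop ((i : ℕ) + 1)).length + 1 = z.length - (i : ℕ) := by
      simp only [List.length_drop, hzr]; omega
    show toZnat (qBaux (a :: w) (z.reverse.drop (i : ℕ))) = _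
    rw [hdrop]
    show toZnat (qBaux w (z.reverse[(i : ℕ)]'(by omega) :: z.reverse.drop ((i : ℕ) + 1))
          * X ^ ((z.reverse.drop ((i : ℕ) + 1)).length + 1)
        + if a = z.reverse[(i : ℕ)]'(by omega) then qBaux w (z.reverse.drop ((i : ℕ) + 1)) else 0) = _
    rw [map_add, map_mul, map_pow, hlen, ← hdrop, mul_comm]
    congr 1
    · simp [Vvec, toZnat]
    · rw [apply_ite toZnat, map_zero, hgd]
      by_cases hcase : a = z.reverse[(i : ℕ)]'(by omega)
      · rw [if_pos hcase, if_pos hcase.symm]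
        rfl
      · rw [if_neg hcase, if_neg (fun h => hcase h.symm)]
  · have hie : (i : ℕ) = z.length := by omega
    have hdrop : z.reverse.drop (i : ℕ) = [] := List.drop_eq_nil_of_le (by omega)
    have hsum2 : ∑ j : Fin (z.length + 1),
        (if ((j : ℕ) = (i : ℕ) + 1 ∧ z.reverse.getD (i : ℕ) a = a) then Vvec z w j else 0) = 0 := by
      apply Finset.sum_eq_zero
      intro j _
      rw [if_neg]
      rintro ⟨h1, -⟩
      omega
    rw [hsum2]
    unfold Vvec
    rw [hdrop, hie, qBaux_nil, qBaux_nil]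
    simp

end

section
variable {α : Type*} [DecidableEq α]

noncomputable def Mword (z : List α) (w : List α) :
    Matrix (Fin (z.length + 1)) (Fin (z.length + 1)) (Polynomial ℤ) :=
  w.foldr (fun a acc => Mstep z a * acc) 1

lemma word_step (z : List α) (w' w : List α) :
    Vvec z (w' ++ w) = (Mword z w').mulVec (Vvec z w) := by
  induction w' with
  | nil => simp [Mword, Matrix.one_mulVec]
  | cons a t ih =>
    show Vvec z (a :: (t ++ w)) = _
    rw [step, ih, Matrix.mulVec_mulVec]
    rfl

lemma mulVec_sum {n : Type*} [Fintype n] {R : Type*} [CommRing R] {ι : Type*} (s : Finset ι)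
    (f : ι → Matrix n n R) (v : n → R) :
    (∑ i ∈ s, f i).mulVec v = ∑ i ∈ s, (f i).mulVec v := by
  funext k
  simp only [Matrix.mulVec, dotProduct, Matrix.sum_apply, Finset.sum_mul]
  rw [Finset.sum_comm]
  simp [Matrix.mulVec, dotProduct, Finset.sum_apply]

lemma Wsucc (u : List α) (n : ℕ) :
    ((List.replicate (n + 1) u).flatten).reverse = u.reverse ++ ((List.replicate n u).flatten).reverse := by
  rw [List.replicate_succ', List.flatten_append, List.reverse_append]
  simp

end

/-- The sequence n ↦ (uⁿ choose z)_q satisfies a linear recurrence with coefficients in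
ℤ[q]; in particular, at q = 1, the integer sequence n ↦ (uⁿ choose z) satisfies a linear
recurrence with constant integer coefficients. -/
theorem stmt17 {α : Type*} [DecidableEq α] (u z : List α) (hu : u ≠ []) (hz : z ≠ []) :
    (∃ (d : ℕ) (a : Fin d → Polynomial ℤ), 0 < d ∧ ∀ n : ℕ,
      toZnat (qB ((List.replicate (n + d) u).flatten) z)
        = ∑ k : Fin d, a k * toZnat (qB ((List.replicate (n + (k : ℕ)) u).flatten) z)) ∧
    (∃ (d : ℕ) (b : Fin d → ℤ), 0 < d ∧ ∀ n : ℕ,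
      (((qB ((List.replicate (n + d) u).flatten) z).eval 1 : ℕ) : ℤ)
        = ∑ k : Fin d, b k * (((qB ((List.replicate (n + (k : ℕ)) u).flatten) z).eval 1 : ℕ) : ℤ)) := by
  classical
  set W : ℕ → List α := fun n => ((List.replicate n u).flatten).reverse with hW
  set B := Mword z u.reverse with hB
  have hrec : ∀ n, Vvec z (W (n + 1)) = B.mulVec (Vvec z (W n)) := by
    intro n
    show Vvec z (((List.replicate (n + 1) u).flatten).reverse) = _
    rw [Wsucc, word_step]
  have hpow : ∀ n m, Vvec z (W (n + m)) = (B ^ m).mulVec (Vvec z (W n)) := by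
    intro n m
    induction m with
    | zero => simp [Matrix.one_mulVec]
    | succ m ih =>
      rw [show n + (m + 1) = (n + m) + 1 from rfl, hrec, ih, Matrix.mulVec_mulVec, ← pow_succ']
  set χ := B.charpoly with hχ
  have hdeg : χ.natDegree = z.length + 1 := by
    rw [hχ, Matrix.charpoly_natDegree_eq_dim, Fintype.card_fin]
  have h0 := Matrix.aeval_self_charpoly B
  rw [Polynomial.aeval_eq_sum_range, hdeg, Finset.sum_range_succ] at h0
  have hlead : χ.coeff (z.length + 1) = 1 := by
    have hm := Matrix.charpoly_monic B
    rw [Polynomial.Monic, Polynomial.leadingCoeff, hdeg] at hm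
    exact hm
  rw [hlead, one_smul] at h0
  have hBd : B ^ (z.length + 1) = ∑ i ∈ Finset.range (z.length + 1), (-(χ.coeff i)) • B ^ i := by
    have h1 : B ^ (z.length + 1) = -(∑ i ∈ Finset.range (z.length + 1), (χ.coeff i) • B ^ i) :=
      eq_neg_of_add_eq_zero_right h0
    rw [h1, ← Finset.sum_neg_distrib]
    exact Finset.sum_congr rfl fun i _ => (neg_smul _ _).symm
  have hqB : ∀ m, toZnat (qB ((List.replicate m u).flatten) z) = Vvec z (W m) 0 := by
    intro m
    simp [qB, Vvec, hW]
  have key : ∀ n, Vvec z (W (n + (z.length + 1))) 0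
      = ∑ i ∈ Finset.range (z.length + 1), (-(χ.coeff i)) * Vvec z (W (n + i)) 0 := by
    intro n
    rw [hpow n (z.length + 1), hBd, mulVec_sum, Finset.sum_apply]
    exact Finset.sum_congr rfl fun i _ => by
      rw [Matrix.smul_mulVec, Pi.smul_apply, smul_eq_mul, ← hpow]
  constructor
  · refine ⟨z.length + 1, fun k => -(χ.coeff k), Nat.succ_pos _, fun n => ?_⟩
    rw [hqB, key, ← Fin.sum_univ_eq_sum_range (fun i => (-(χ.coeff i)) * Vvec z (W (n + i)) 0) (z.length + 1)]
    exact Finset.sum_congr rfl fun k _ => by rw [hqB]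
  · refine ⟨z.length + 1, fun k => (-(χ.coeff k)).eval 1, Nat.succ_pos _, fun n => ?_⟩
    have keyev : ∀ p : Polynomial ℕ, ((p.eval 1 : ℕ) : ℤ) = (toZnat p).eval 1 := by
      intro p
      simp [toZnat, Polynomial.eval_map, Polynomial.eval₂_at_one]
    rw [keyev, hqB, key, Polynomial.eval_finset_sum,
      ← Fin.sum_univ_eq_sum_range (fun i => ((-(χ.coeff i)) * Vvec z (W (n + i)) 0).eval 1) (z.length + 1)]
    exact Finset.sum_congr rfl fun k _ => by rw [Polynomial.eval_mul, keyev, hqB]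
end

section
/- For any word z and any word u over the alphabet of z, every minor of the q-Parikh matrix P_z(u) is a polynomial in q with non-negative integer coefficients. In particular, for M = P_z(u)^{−1} and 1 ≤ i ≤ j ≤ |z|+1, the entry (−1)^{i+j} M_{i,j} is a polynomial with non-negative integer coefficients. -/
open Polynomial

namespace Stmt18aux

open Matrix

/-- nonneg coefficients -/
def NN (p : Polynomial ℤ) : Prop := ∀ m, 0 ≤ p.coeff m

lemma NN_zero : NN 0 := fun m => by simp
lemma NN_one : NN 1 := fun m => by
  rcases eq_or_ne m 0 with h | h <;> simp [Polynomial.coeff_one, h]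

lemma NN_add {p q : Polynomial ℤ} (hp : NN p) (hq : NN q) : NN (p + q) := fun m => by
  rw [Polynomial.coeff_add]; exact add_nonneg (hp m) (hq m)

lemma NN_mul {p q : Polynomial ℤ} (hp : NN p) (hq : NN q) : NN (p * q) := fun m => by
  rw [Polynomial.coeff_mul]
  exact Finset.sum_nonneg fun x _ => mul_nonneg (hp _) (hq _)

lemma NN_sum {ι : Type*} (s : Finset ι) (f : ι → Polynomial ℤ)
    (h : ∀ i ∈ s, NN (f i)) : NN (∑ i ∈ s, f i) := fun m => by
  rw [Polynomial.finset_sum_coeff]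
  exact Finset.sum_nonneg fun i hi => h i hi m

lemma NN_toZnat (p : Polynomial ℕ) : NN (toZnat p) := fun m => by
  simp [toZnat, Polynomial.coeff_map]

/-- all minors have nonneg coefficients -/
def QQ {N : ℕ} (B : Matrix (Fin N) (Fin N) (Polynomial ℤ)) : Prop :=
  ∀ (ℓ : ℕ) (r c : Fin ℓ → Fin N), StrictMono r → StrictMono c →
    NN ((B.submatrix r c).det)

lemma Q_one {N : ℕ} : QQ (1 : Matrix (Fin N) (Fin N) (Polynomial ℤ)) := by
  intro ℓ r c hr hc
  by_cases hrc : r = c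
  · subst hrc
    rw [Matrix.submatrix_one r hr.injective, Matrix.det_one]
    exact NN_one
  · by_cases hall : ∀ s, ∃ t, r s = c t
    · exfalso
      apply hrc
      have hcard : (Finset.image c Finset.univ).card = ℓ := by
        rw [Finset.card_image_of_injective _ hc.injective, Finset.card_univ, Fintype.card_fin]
      have h1 : r = Finset.orderEmbOfFin _ hcard := by
        refine Finset.orderEmbOfFin_unique hcard (fun x => ?_) hr
        obtain ⟨t, ht⟩ := hall x
        exact ht ▸ Finset.mem_image_of_mem c (Finset.mem_univ t)
      have h2 : c = Finset.orderEmbOfFin _ hcard :=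
        Finset.orderEmbOfFin_unique hcard
          (fun x => Finset.mem_image_of_mem c (Finset.mem_univ x)) hc
      exact h1.trans h2.symm
    · push_neg at hall
      obtain ⟨s, hs⟩ := hall
      rw [Matrix.det_eq_zero_of_row_eq_zero s fun t => ?_]
      · exact NN_zero
      · simp only [Matrix.submatrix_apply]
        exact Matrix.one_apply_ne (hs t)

lemma det_updateRow_sum' {n R : Type*} [DecidableEq n] [Fintype n] [CommRing R] {κ : Type*}
    (M : Matrix n n R) (i : n) (s : Finset κ) (f : κ → n → R) :
    (M.updateRow i (∑ j ∈ s, f j)).det = ∑ j ∈ s, (M.updateRow i (f j)).det := by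
  classical
  induction s using Finset.induction_on with
  | empty =>
    simp only [Finset.sum_empty]
    rw [Matrix.det_eq_zero_of_row_eq_zero i fun t => ?_]
    simp [Matrix.updateRow_self]
  | insert _ _ hk ih =>
    rw [Finset.sum_insert hk, Finset.sum_insert hk, Matrix.det_updateRow_add, ih]

lemma step {N ℓ : ℕ} (A B : Matrix (Fin N) (Fin N) (Polynomial ℤ))
    (hA0 : ∀ i j : Fin N, (j : ℕ) ≠ (i : ℕ) → (j : ℕ) ≠ (i : ℕ) + 1 → A i j = 0)
    (hA1 : ∀ i j, NN (A i j)) (hB : QQ B)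
    (r c : Fin ℓ → Fin N) (hr : StrictMono r) (hc : StrictMono c) :
    ∀ (d k : ℕ), ℓ ≤ k + d →
      ∀ r' : Fin ℓ → Fin N, (∀ s : Fin ℓ, k ≤ (s : ℕ) → r' s = r s) →
        (∀ s : Fin ℓ, (r' s : ℕ) = (r s : ℕ) ∨ (r' s : ℕ) = (r s : ℕ) + 1) →
        NN (Matrix.det (Matrix.of fun (s t : Fin ℓ) =>
          if (s : ℕ) < k then B (r' s) (c t) else (A * B) (r s) (c t))) := by
  intro d
  induction d with
  | zero =>
    intro k hk r' _ h2
    have hmat : (Matrix.of fun (s t : Fin ℓ) =>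
        if (s : ℕ) < k then B (r' s) (c t) else (A * B) (r s) (c t))
        = B.submatrix r' c := by
      ext s t
      simp only [Matrix.of_apply, Matrix.submatrix_apply]
      rw [if_pos (lt_of_lt_of_le s.isLt (by omega))]
    rw [hmat]
    have hmono : ∀ s t : Fin ℓ, s < t → r' s ≤ r' t := by
      intro s t hst
      have h1 := h2 s
      have h2' := h2 t
      have hlt : (r s : ℕ) < (r t : ℕ) := hr hst
      have : (r' s : ℕ) ≤ (r' t : ℕ) := by omega
      exact Fin.le_def.mpr this
    by_cases hinj : Function.Injective r'
    · have hsm : StrictMono r' := fun s t hst =>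
        lt_of_le_of_ne (hmono s t hst) (fun h => hst.ne (hinj h))
      exact hB ℓ r' c hsm hc
    · rw [Function.not_injective_iff] at hinj
      obtain ⟨s, t, hst, hne⟩ := hinj
      rw [Matrix.det_zero_of_row_eq hne (by
        funext x; simp [Matrix.submatrix_apply, hst])]
      exact NN_zero
  | succ d ih =>
    intro k hk r' h1 h2
    by_cases hkl : ℓ ≤ k + d
    · exact ih k hkl r' h1 h2
    have hkℓ : k < ℓ := by omega
    set s₀ : Fin ℓ := ⟨k, hkℓ⟩ with hs₀
    set M : Matrix (Fin ℓ) (Fin ℓ) (Polynomial ℤ) := Matrix.of fun (s t : Fin ℓ) =>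
      if (s : ℕ) < k then B (r' s) (c t) else (A * B) (r s) (c t) with hM
    have hrow : M s₀ = ∑ j : Fin N, A (r s₀) j • (fun t => B j (c t)) := by
      funext t
      simp only [hM, Matrix.of_apply, hs₀, lt_irrefl, if_neg (lt_irrefl k), Matrix.mul_apply]
      simp [Finset.sum_apply]
    have hdet : M.det = ∑ j : Fin N, A (r s₀) j *
        (M.updateRow s₀ (fun t => B j (c t))).det := by
      conv_lhs => rw [← Matrix.updateRow_eq_self M s₀, hrow]
      rw [det_updateRow_sum' M s₀ Finset.univ]
      refine Finset.sum_congr rfl fun j _ => ?_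
      rw [Matrix.det_updateRow_smul]
    rw [hdet]
    refine NN_sum _ _ fun j _ => ?_
    by_cases hz : A (r s₀) j = 0
    · rw [hz, zero_mul]; exact NN_zero
    · have hj : (j : ℕ) = (r s₀ : ℕ) ∨ (j : ℕ) = (r s₀ : ℕ) + 1 := by
        by_contra h
        push_neg at h
        exact hz (hA0 _ _ h.1 h.2)
      refine NN_mul (hA1 _ _) ?_
      have hmat : M.updateRow s₀ (fun t => B j (c t)) = Matrix.of fun (s t : Fin ℓ) =>
          if (s : ℕ) < k + 1 then B (Function.update r' s₀ j s) (c t)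
          else (A * B) (r s) (c t) := by
        ext s t
        by_cases hs : s = s₀
        · subst hs
          rw [Matrix.updateRow_self]
          simp [hs₀, Function.update_self]
        · rw [Matrix.updateRow_ne hs]
          have hsk : (s : ℕ) ≠ k := fun h => hs (Fin.ext h)
          simp only [hM, Matrix.of_apply, Function.update_of_ne hs]
          by_cases hlt : (s : ℕ) < k
          · rw [if_pos hlt, if_pos (by omega)]
          · rw [if_neg hlt, if_neg (by omega)]
      rw [hmat]
      refine ih (k + 1) (by omega) _ (fun s hs => ?_) (fun s => ?_)
      · have hne : s ≠ s₀ := by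
          intro h
          have : (s : ℕ) = k := by rw [h]
          omega
        rw [Function.update_of_ne hne]
        exact h1 s (by omega)
      · by_cases hs : s = s₀
        · subst hs; rw [Function.update_self]; exact hj
        · rw [Function.update_of_ne hs]; exact h2 s

lemma Q_mul {N : ℕ} {A B : Matrix (Fin N) (Fin N) (Polynomial ℤ)}
    (hA0 : ∀ i j : Fin N, (j : ℕ) ≠ (i : ℕ) → (j : ℕ) ≠ (i : ℕ) + 1 → A i j = 0)
    (hA1 : ∀ i j, NN (A i j)) (hB : QQ B) : QQ (A * B) := by
  intro ℓ r c hr hc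
  have h := step A B hA0 hA1 hB r c hr hc ℓ 0 (by omega) r (fun _ _ => rfl)
    (fun s => Or.inl rfl)
  have hmat : (Matrix.of fun (s t : Fin ℓ) =>
      if (s : ℕ) < 0 then B (r s) (c t) else (A * B) (r s) (c t))
      = (A * B).submatrix r c := by
    ext s t
    simp
  rwa [hmat] at h

lemma entryM_map_zero {α : Type*} [DecidableEq α] (n : ℕ) (z : List α) (d : α) (jj : ℕ)
    (i j : Fin (n+1)) (h1 : (j : ℕ) ≠ (i : ℕ)) (h2 : (j : ℕ) ≠ (i : ℕ) + 1) :
    ((entryM n z d jj).map toZnat) i j = 0 := by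
  have : entryM n z d jj i j = 0 := by
    simp only [entryM, Matrix.of_apply]
    rw [if_neg (fun h => h1 (by rw [h])), if_neg (fun h => h2 h.1)]
  simp [Matrix.map_apply, this]

lemma Q_Pm {α : Type*} [DecidableEq α] (n : ℕ) (z : List α) (u : List α) :
    QQ ((Pm n z u).map toZnat) := by
  induction u with
  | nil =>
    have : (Pm n z []).map toZnat = 1 := by
      show ((1 : Matrix (Fin (n+1)) (Fin (n+1)) (Polynomial ℕ))).map toZnat = 1
      rw [Matrix.map_one _ (map_zero toZnat) (map_one toZnat)]
    rw [this]; exact Q_one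
  | cons a t ih =>
    have : (Pm n z (a :: t)).map toZnat
        = ((entryM n z a t.length).map toZnat) * ((Pm n z t).map toZnat) := by
      show ((entryM n z a t.length) * (Pm n z t)).map toZnat = _
      rw [Matrix.map_mul]
    rw [this]
    exact Q_mul (entryM_map_zero n z a t.length) (fun i j => NN_toZnat _) ih

lemma det_Pm {α : Type*} [DecidableEq α] (n : ℕ) (z : List α) (u : List α) :
    ((Pm n z u).map toZnat).det = 1 := by
  induction u with
  | nil =>
    have : (Pm n z []).map toZnat = 1 := by
      show ((1 : Matrix (Fin (n+1)) (Fin (n+1)) (Polynomial ℕ))).map toZnat = 1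
      rw [Matrix.map_one _ (map_zero toZnat) (map_one toZnat)]
    rw [this, Matrix.det_one]
  | cons a t ih =>
    have hsplit : (Pm n z (a :: t)).map toZnat
        = ((entryM n z a t.length).map toZnat) * ((Pm n z t).map toZnat) := by
      show ((entryM n z a t.length) * (Pm n z t)).map toZnat = _
      rw [Matrix.map_mul]
    rw [hsplit, Matrix.det_mul, ih, mul_one]
    have hbt : ((entryM n z a t.length).map toZnat).BlockTriangular id := by
      intro i j hij
      exact entryM_map_zero n z a t.length i j (Nat.ne_of_lt hij)
        (by have : (j : ℕ) < (i : ℕ) := hij; omega)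
    rw [Matrix.det_of_upperTriangular hbt]
    refine Finset.prod_eq_one fun i _ => ?_
    simp [Matrix.map_apply, entryM]

end Stmt18aux

open Stmt18aux in
/-- Every minor of the q-Parikh matrix P_z(u) has non-negative coefficients; in particular
(-1)^{i+j} [P_z(u)⁻¹]_{i,j} has non-negative coefficients. -/
theorem stmt18 {α : Type*} [DecidableEq α] (z u : List α) (hu : ∀ a ∈ u, a ∈ z) :
    (∀ (n : ℕ) (r c : Fin n → Fin (z.length + 1)), StrictMono r → StrictMono c →
      ∀ m : ℕ, 0 ≤ ((((Pm z.length z u).map toZnat).submatrix r c).det).coeff m) ∧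
    (∀ i j : Fin (z.length + 1), i ≤ j → ∀ m : ℕ,
      0 ≤ ((-1 : Polynomial ℤ) ^ ((i : ℕ) + (j : ℕ)) *
            (((Pm z.length z u).map toZnat)⁻¹ i j)).coeff m) := by
  have hQ := Q_Pm z.length z u
  constructor
  · intro n r c hr hc m
    exact hQ n r c hr hc m
  · intro i j _ m
    have hdet : ((Pm z.length z u).map toZnat).det = 1 := det_Pm z.length z u
    have hinv : ((Pm z.length z u).map toZnat)⁻¹ = ((Pm z.length z u).map toZnat).adjugate := by
      rw [Matrix.inv_def, hdet, Ring.inverse_one, one_smul]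
    rw [hinv, Matrix.adjugate_fin_succ_eq_det_submatrix]
    have hpow : ((-1 : Polynomial ℤ) ^ ((i : ℕ) + (j : ℕ)) *
        ((-1 : Polynomial ℤ) ^ ((j : ℕ) + (i : ℕ)) *
          (((Pm z.length z u).map toZnat).submatrix j.succAbove i.succAbove).det))
        = (((Pm z.length z u).map toZnat).submatrix j.succAbove i.succAbove).det := by
      rw [← mul_assoc, ← pow_add]
      rw [Even.neg_one_pow ⟨(i : ℕ) + (j : ℕ), by ring⟩, one_mul]
    rw [hpow]
    exact hQ z.length j.succAbove i.succAbove (Fin.strictMono_succAbove j)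
      (Fin.strictMono_succAbove i) m
end
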